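/- arXiv:1908.03765 — 7 statements merged into one kernel-verified Lean document; each statement's English description precedes it below -/
import Mathlib

section
/- Let K be a field, let a, b be positive integers, and let F be a finite set of pairs (c,d) of positive integers with c < a and d < b. Let I be the ideal of K[x,y] generated by x^a, y^b and the monomials x^c y^d for (c,d) ∈ F, and let J = (x^a, y^b). Then there exists an integer r ≥ 0 with I^{r+1} = J·I^r (i.e. J is a reduction ideal of I) if and only if b·c + a·d ≥ a·b for every (c,d) ∈ F. -/
open MvPolynomial

/-- The monomial `x^c y^d` in `K[x,y]`. -/
noncomputable def mono (K : Type*) [Field K] (c d : ℕ) : MvPolynomial (Fin 2) K :=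
  X 0 ^ c * X 1 ^ d

/-- The ideal `J = (x^a, y^b)`. -/
noncomputable def Jab (K : Type*) [Field K] (a b : ℕ) : Ideal (MvPolynomial (Fin 2) K) :=
  Ideal.span {mono K a 0, mono K 0 b}

namespace Stmt0Aux

open Finsupp Pointwise

noncomputable def ex (c d : ℕ) : Fin 2 →₀ ℕ :=
  Finsupp.single 0 c + Finsupp.single 1 d

@[simp] lemma ex_apply0 (c d : ℕ) : ex c d 0 = c := by
  simp [ex, Finsupp.single_apply]

@[simp] lemma ex_apply1 (c d : ℕ) : ex c d 1 = d := by
  simp [ex, Finsupp.single_apply]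

lemma mono_eq (K : Type*) [Field K] (c d : ℕ) : mono K c d = monomial (ex c d) (1:K) := by
  simp [mono, ex, X_pow_eq_monomial, monomial_mul]

/-- span of monomials with exponents in `S` -/
noncomputable def msp (K : Type*) [Field K] (S : Set (Fin 2 →₀ ℕ)) :
    Ideal (MvPolynomial (Fin 2) K) :=
  Ideal.span ((fun e => monomial e (1:K)) '' S)

variable {K : Type*} [Field K]

lemma mem_msp_iff {S : Set (Fin 2 →₀ ℕ)} {f : MvPolynomial (Fin 2) K} :
    f ∈ msp K S ↔ ∀ xi ∈ f.support, ∃ si ∈ S, si ≤ xi :=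
  mem_ideal_span_monomial_image

lemma monomial_mem_msp {S : Set (Fin 2 →₀ ℕ)} {e : Fin 2 →₀ ℕ} (h : e ∈ S) :
    monomial e (1:K) ∈ msp K S :=
  Ideal.subset_span ⟨e, h, rfl⟩

lemma msp_mul (A B : Set (Fin 2 →₀ ℕ)) : msp K A * msp K B = msp K (A + B) := by
  rw [msp, msp, msp, Ideal.span_mul_span']
  congr 1
  ext x
  simp only [Set.mem_mul, Set.mem_image, Set.mem_add]
  constructor
  · rintro ⟨-, ⟨u, hu, rfl⟩, -, ⟨v, hv, rfl⟩, rfl⟩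
    exact ⟨u + v, ⟨u, hu, v, hv, rfl⟩, by rw [monomial_mul, one_mul]⟩
  · rintro ⟨-, ⟨u, hu, v, hv, rfl⟩, rfl⟩
    exact ⟨_, ⟨u, hu, rfl⟩, _, ⟨v, hv, rfl⟩, by rw [monomial_mul, one_mul]⟩

/-- `setT S n` = set of sums of `n` elements of `S` -/
def setT (S : Set (Fin 2 →₀ ℕ)) : ℕ → Set (Fin 2 →₀ ℕ)
  | 0 => {0}
  | n+1 => S + setT S n

lemma msp_pow (S : Set (Fin 2 →₀ ℕ)) (n : ℕ) : msp K S ^ n = msp K (setT S n) := by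
  induction n with
  | zero =>
      rw [pow_zero, setT, msp]
      rw [Set.image_singleton]
      have : (monomial (0 : Fin 2 →₀ ℕ) (1:K)) = 1 := by simp
      rw [this, Ideal.span_singleton_one, Ideal.one_eq_top]
  | succ n ih =>
      rw [pow_succ', ih, msp_mul]
      rfl

lemma mem_setT {S : Set (Fin 2 →₀ ℕ)} {n : ℕ} {e : Fin 2 →₀ ℕ} :
    e ∈ setT S n ↔ ∃ l : Multiset (Fin 2 →₀ ℕ),
      Multiset.card l = n ∧ (∀ x ∈ l, x ∈ S) ∧ l.sum = e := by
  induction n generalizing e with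
  | zero =>
      constructor
      · intro h
        refine ⟨0, rfl, by simp, ?_⟩
        simpa [setT] using h.symm
      · rintro ⟨l, hc, -, rfl⟩
        rw [Multiset.card_eq_zero] at hc
        subst hc
        simp [setT]
  | succ n ih =>
      constructor
      · intro h
        obtain ⟨u, hu, t, ht, rfl⟩ := Set.mem_add.mp h
        obtain ⟨l, hc, hm, rfl⟩ := ih.mp ht
        refine ⟨u ::ₘ l, by simp [hc], ?_, by simp⟩
        intro x hx
        rcases Multiset.mem_cons.mp hx with rfl | hx
        · exact hu
        · exact hm x hx
      · rintro ⟨l, hc, hm, rfl⟩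
        have hne : l ≠ 0 := by
          intro h0; rw [h0] at hc; simp at hc
        obtain ⟨u, hu⟩ := Multiset.exists_mem_of_ne_zero hne
        obtain ⟨l', rfl⟩ := Multiset.exists_cons_of_mem hu
        rw [Multiset.sum_cons]
        refine Set.add_mem_add (hm u (Multiset.mem_cons_self u l')) (ih.mpr ⟨l', ?_, ?_, rfl⟩)
        · simpa using hc
        · exact fun x hx => hm x (Multiset.mem_cons_of_mem hx)

end Stmt0Aux

open Stmt0Aux Pointwise Finsupp

theorem stmt0 (K : Type*) [Field K] (a b : ℕ) (ha : 0 < a) (hb : 0 < b)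
    (F : Finset (ℕ × ℕ))
    (hF : ∀ p ∈ F, 0 < p.1 ∧ p.1 < a ∧ 0 < p.2 ∧ p.2 < b) :
    (∃ r : ℕ,
      Ideal.span ({mono K a 0, mono K 0 b} ∪
          (fun p : ℕ × ℕ => mono K p.1 p.2) '' (F : Set (ℕ × ℕ))) ^ (r + 1)
        = Jab K a b *
          Ideal.span ({mono K a 0, mono K 0 b} ∪
            (fun p : ℕ × ℕ => mono K p.1 p.2) '' (F : Set (ℕ × ℕ))) ^ r)
    ↔ ∀ p ∈ F, a * b ≤ b * p.1 + a * p.2 := by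
  classical
  set S0 : Set (Fin 2 →₀ ℕ) :=
    {ex a 0, ex 0 b} ∪ (fun p : ℕ × ℕ => ex p.1 p.2) '' (F : Set (ℕ × ℕ)) with hS0
  have hIset : ({mono K a 0, mono K 0 b} ∪
      (fun p : ℕ × ℕ => mono K p.1 p.2) '' (F : Set (ℕ × ℕ)))
      = (fun e => monomial e (1:K)) '' S0 := by
    rw [hS0, Set.image_union, Set.image_insert_eq, Set.image_singleton, Set.image_image]
    simp only [mono_eq]
  have hJ : Jab K a b = msp K {ex a 0, ex 0 b} := by
    rw [Jab, msp, Set.image_insert_eq, Set.image_singleton]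
    simp only [mono_eq]
  have hconv : ∀ r : ℕ,
      (Ideal.span ({mono K a 0, mono K 0 b} ∪
          (fun p : ℕ × ℕ => mono K p.1 p.2) '' (F : Set (ℕ × ℕ))) ^ (r + 1)
        = Jab K a b *
          Ideal.span ({mono K a 0, mono K 0 b} ∪
            (fun p : ℕ × ℕ => mono K p.1 p.2) '' (F : Set (ℕ × ℕ))) ^ r)
      ↔ msp K (setT S0 (r+1)) = msp K (({ex a 0, ex 0 b} : Set _) + setT S0 r) := by
    intro r
    rw [hIset, hJ,
      show Ideal.span ((fun e => monomial e (1:K)) '' S0) = msp K S0 from rfl,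
      msp_pow, msp_pow, msp_mul]
  simp only [hconv]
  -- membership helper facts about S0
  have hmemS0a : ex a 0 ∈ S0 := Or.inl (Or.inl rfl)
  have hmemS0b : ex 0 b ∈ S0 := Or.inl (Or.inr rfl)
  have hmemS0F : ∀ p ∈ F, ex p.1 p.2 ∈ S0 := fun p hp => Or.inr ⟨p, hp, rfl⟩
  constructor
  · -- reduction ⇒ inequalities
    rintro ⟨r, hr⟩ p hp
    by_contra hc
    push_neg at hc
    -- take minimum weight violating element
    set W : ℕ × ℕ → ℕ := fun q => b * q.1 + a * q.2 with hW
    set F' : Finset (ℕ × ℕ) := F.filter (fun q => W q < a * b) with hF'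
    have hpF' : p ∈ F' := Finset.mem_filter.mpr ⟨hp, hc⟩
    obtain ⟨p₀, hp₀, hmin⟩ := F'.exists_min_image W ⟨p, hpF'⟩
    have hp₀F : p₀ ∈ F := (Finset.mem_filter.mp hp₀).1
    set μ := W p₀ with hμ
    have hμab : μ < a * b := (Finset.mem_filter.mp hp₀).2
    have hμmin : ∀ q ∈ F, μ ≤ W q := by
      intro q hq
      by_cases h' : W q < a * b
      · exact hmin q (Finset.mem_filter.mpr ⟨hq, h'⟩)
      · push_neg at h'
        exact le_trans hμab.le h'
    have hwS0 : ∀ e ∈ S0, μ ≤ b * e 0 + a * e 1 := by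
      rintro e (h | ⟨q, hq, rfl⟩)
      · rcases h with rfl | rfl
        · simp only [ex_apply0, ex_apply1, Nat.mul_zero, Nat.add_zero]
          rw [Nat.mul_comm]; exact hμab.le
        · simp only [ex_apply0, ex_apply1, Nat.mul_zero, Nat.zero_add]
          exact hμab.le
      · simpa using hμmin q hq
    have hT : ∀ n : ℕ, ∀ e ∈ setT S0 n, n * μ ≤ b * e 0 + a * e 1 := by
      intro n e he
      obtain ⟨l, hc', hm, rfl⟩ := mem_setT.mp he
      clear he
      subst hc'
      induction l using Multiset.induction with
      | empty => simp
      | cons x l ih =>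
          have h1 : Multiset.card l * μ ≤ b * l.sum 0 + a * l.sum 1 :=
            ih (fun y hy => hm y (Multiset.mem_cons_of_mem hy))
          have h2 : μ ≤ b * x 0 + a * x 1 := hwS0 x (hm x (Multiset.mem_cons_self x l))
          rw [Multiset.sum_cons]
          simp only [Multiset.card_cons, Finsupp.add_apply]
          have : (Multiset.card l + 1) * μ = Multiset.card l * μ + μ := by ring
          rw [this]
          have hrhs : b * (x 0 + l.sum 0) + a * (x 1 + l.sum 1)
              = (b * x 0 + a * x 1) + (b * l.sum 0 + a * l.sum 1) := by ring
          rw [hrhs]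
          omega
    -- the element ((r+1)•e₀)
    set e₀ := ex p₀.1 p₀.2 with he₀
    have heN : ((r+1) • e₀) ∈ setT S0 (r+1) := by
      refine mem_setT.mpr ⟨Multiset.replicate (r+1) e₀, Multiset.card_replicate _ _, ?_,
        Multiset.sum_replicate _ _⟩
      intro x hx
      rw [Multiset.eq_of_mem_replicate hx]
      exact hmemS0F p₀ hp₀F
    have hmem1 : monomial ((r+1) • e₀) (1:K) ∈ msp K (setT S0 (r+1)) :=
      monomial_mem_msp heN
    rw [hr] at hmem1
    have hsupp : ((r+1) • e₀) ∈ (monomial ((r+1) • e₀) (1:K)).support := by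
      rw [support_monomial, if_neg one_ne_zero]
      exact Finset.mem_singleton_self _
    obtain ⟨s, hsmem, hsle⟩ := mem_msp_iff.mp hmem1 _ hsupp
    obtain ⟨u, hu, t, ht, rfl⟩ := Set.mem_add.mp hsmem
    have hwu : a * b ≤ b * u 0 + a * u 1 := by
      rcases hu with rfl | rfl
      · simp only [ex_apply0, ex_apply1, Nat.mul_zero, Nat.add_zero]
        rw [Nat.mul_comm]
      · simp only [ex_apply0, ex_apply1, Nat.mul_zero, Nat.zero_add]
        exact le_rfl
    have hwt : r * μ ≤ b * t 0 + a * t 1 := hT r t ht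
    have hle0 : (u + t) 0 ≤ (r+1) * p₀.1 := by
      have := Finsupp.le_def.mp hsle 0
      simpa [Finsupp.smul_apply, he₀] using this
    have hle1 : (u + t) 1 ≤ (r+1) * p₀.2 := by
      have := Finsupp.le_def.mp hsle 1
      simpa [Finsupp.smul_apply, he₀] using this
    simp only [Finsupp.add_apply] at hle0 hle1
    have hwsum : b * ((u+t) 0) + a * ((u+t) 1) ≤ (r+1) * μ := by
      simp only [Finsupp.add_apply]
      have : (r+1) * μ = b * ((r+1) * p₀.1) + a * ((r+1) * p₀.2) := by
        simp only [hμ, hW]; ring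
      rw [this]
      have := Nat.add_le_add (Nat.mul_le_mul_left b (by omega : u 0 + t 0 ≤ (r+1) * p₀.1))
        (Nat.mul_le_mul_left a (by omega : u 1 + t 1 ≤ (r+1) * p₀.2))
      omega
    simp only [Finsupp.add_apply] at hwsum
    have hfinal : a * b + r * μ ≤ (r+1) * μ := by
      have h1 : a * b + r * μ ≤ (b * u 0 + a * u 1) + (b * t 0 + a * t 1) :=
        Nat.add_le_add hwu hwt
      have h2 : (b * u 0 + a * u 1) + (b * t 0 + a * t 1)
          = b * (u 0 + t 0) + a * (u 1 + t 1) := by ring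
      omega
    have : (r+1) * μ = r * μ + μ := by ring
    omega
  · -- inequalities ⇒ reduction
    intro h
    refine ⟨F.card * a, ?_⟩
    set r := F.card * a with hrdef
    have hcomb : ∀ e ∈ setT S0 (r+1),
        ∃ s ∈ (({ex a 0, ex 0 b} : Set (Fin 2 →₀ ℕ)) + setT S0 r), s ≤ e := by
      intro e he
      obtain ⟨l, hcard, hmem, rfl⟩ := mem_setT.mp he
      by_cases h1 : ex a 0 ∈ l
      · obtain ⟨l', rfl⟩ := Multiset.exists_cons_of_mem h1
        refine ⟨_, Set.add_mem_add (Or.inl rfl)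
          (mem_setT.mpr ⟨l', by simpa using hcard,
            fun x hx => hmem x (Multiset.mem_cons_of_mem hx), rfl⟩), ?_⟩
        rw [Multiset.sum_cons]
      by_cases h2 : ex 0 b ∈ l
      · obtain ⟨l', rfl⟩ := Multiset.exists_cons_of_mem h2
        refine ⟨_, Set.add_mem_add (Or.inr rfl)
          (mem_setT.mpr ⟨l', by simpa using hcard,
            fun x hx => hmem x (Multiset.mem_cons_of_mem hx), rfl⟩), ?_⟩
        rw [Multiset.sum_cons]
      -- all elements of l come from F
      have hall : ∀ x ∈ l, x ∈ (fun p : ℕ × ℕ => ex p.1 p.2) '' (F : Set (ℕ × ℕ)) := by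
        intro x hx
        rcases hmem x hx with (h' | h')
        · rcases h' with rfl | rfl
          · exact absurd hx h1
          · exact absurd hx h2
        · exact h'
      have hlne : l ≠ 0 := by
        intro h0; rw [h0] at hcard; simp at hcard
      obtain ⟨x₀, hx₀⟩ := Multiset.exists_mem_of_ne_zero hlne
      obtain ⟨q₀, hq₀, -⟩ := hall x₀ hx₀
      have hFc : 1 ≤ F.card := Finset.card_pos.mpr ⟨q₀, hq₀⟩
      -- pigeonhole
      have hpig : ∃ v ∈ l, a ≤ l.count v := by
        by_contra hno
        push_neg at hno
        have h1' : Multiset.card l = ∑ v ∈ l.toFinset, l.count v :=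
          (Multiset.toFinset_sum_count_eq l).symm
        have h2' : ∑ v ∈ l.toFinset, l.count v ≤ l.toFinset.card * (a - 1) := by
          have := Finset.sum_le_card_nsmul l.toFinset (fun v => l.count v) (a - 1)
            (fun x hx => by
              show l.count x ≤ a - 1
              have := hno x (Multiset.mem_toFinset.mp hx)
              omega)
          simpa using this
        have h3' : l.toFinset.card ≤ F.card := by
          have hsub : l.toFinset ⊆ F.image (fun p => ex p.1 p.2) := by
            intro x hx
            obtain ⟨q, hq, rfl⟩ := hall x (Multiset.mem_toFinset.mp hx)
            exact Finset.mem_image_of_mem _ hq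
          exact le_trans (Finset.card_le_card hsub) Finset.card_image_le
        have h4' : l.toFinset.card * (a - 1) ≤ F.card * (a - 1) :=
          Nat.mul_le_mul_right _ h3'
        have h5' : F.card * (a - 1) + F.card = F.card * a := by
          rw [← Nat.mul_succ]
          congr 1
          omega
        omega
      obtain ⟨v, hvl, hcount⟩ := hpig
      obtain ⟨q, hqF, rfl⟩ := hall v hvl
      set c := q.1 with hcq
      set d := q.2 with hdq
      have hc : c < a := (hF q hqF).2.1
      have hd : d < b := (hF q hqF).2.2.2
      have hcd : a * b ≤ b * c + a * d := h q hqF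
      have hra : a ≤ r + 1 := by
        have : a ≤ F.card * a := Nat.le_mul_of_pos_left a hFc
        omega
      have hrepl : Multiset.replicate a (ex c d) ≤ l :=
        Multiset.le_count_iff_replicate_le.mp hcount
      set m' : Multiset (Fin 2 →₀ ℕ) :=
        (l - Multiset.replicate a (ex c d)) + Multiset.replicate c (ex a 0)
          + Multiset.replicate (a - 1 - c) (ex 0 b) with hm'
      have hkey : (c • ex a 0 + (a - c) • ex 0 b : Fin 2 →₀ ℕ) ≤ a • ex c d := by
        rw [Finsupp.le_def]
        intro i
        fin_cases i
        · simp only [Finsupp.add_apply, Finsupp.smul_apply, smul_eq_mul]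
          show c * (ex a 0) 0 + (a - c) * (ex 0 b) 0 ≤ a * (ex c d) 0
          simp only [ex_apply0]
          have := Nat.mul_comm c a
          omega
        · show c * (ex a 0) 1 + (a - c) * (ex 0 b) 1 ≤ a * (ex c d) 1
          simp only [ex_apply1]
          have h3 : (a - c) * b + c * b = a * b := by
            rw [← Nat.add_mul]
            congr 1
            omega
          have h4 : b * c = c * b := Nat.mul_comm b c
          omega
      have hsum : l.sum = (l - Multiset.replicate a (ex c d)).sum + a • ex c d := by
        conv_lhs => rw [← tsub_add_cancel_of_le hrepl]
        rw [Multiset.sum_add, Multiset.sum_replicate]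
      refine ⟨ex 0 b + m'.sum, Set.add_mem_add (Or.inr rfl)
        (mem_setT.mpr ⟨m', ?_, ?_, rfl⟩), ?_⟩
      · -- cardinality
        rw [hm']
        simp only [Multiset.card_add, Multiset.card_replicate,
          Multiset.card_sub hrepl, Multiset.card_replicate, hcard]
        omega
      · -- membership
        intro x hx
        rw [hm'] at hx
        simp only [Multiset.mem_add] at hx
        rcases hx with (hx | hx) | hx
        · exact hmem x (Multiset.mem_of_le (Multiset.sub_le_self _ _) hx)
        · rw [Multiset.eq_of_mem_replicate hx]; exact hmemS0a
        · rw [Multiset.eq_of_mem_replicate hx]; exact hmemS0b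
      · -- the inequality
        have hs' : ex 0 b + m'.sum
            = (l - Multiset.replicate a (ex c d)).sum + (c • ex a 0 + (a - c) • ex 0 b) := by
          rw [hm']
          simp only [Multiset.sum_add, Multiset.sum_replicate]
          have hac : a - c = (a - 1 - c) + 1 := by omega
          rw [hac, succ_nsmul]
          abel
        rw [hs', hsum]
        exact add_le_add le_rfl hkey
    apply le_antisymm
    · rw [msp, Ideal.span_le]
      rintro - ⟨e, he, rfl⟩
      rw [SetLike.mem_coe]
      refine mem_msp_iff.mpr ?_
      intro xi hxi
      rw [support_monomial, if_neg one_ne_zero, Finset.mem_singleton] at hxi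
      subst hxi
      exact hcomb xi he
    · apply Ideal.span_mono
      apply Set.image_mono
      rintro - ⟨u, hu, t, ht, rfl⟩
      show u + t ∈ setT S0 (r+1)
      refine Set.add_mem_add ?_ ht
      rcases hu with rfl | rfl
      · exact hmemS0a
      · exact hmemS0b
end

section
/- Let K be a field, a, b positive integers, g = gcd(a,b), and let A be a set with {0,g} ⊆ A ⊆ {0,1,…,g}. Let d = gcd(A) (note d divides g), let I = I_A and J = (x^a, y^b). Then I^{g/d} = J·I^{g/d − 1}; in other words, the reduction number of I with respect to J is strictly less than g/gcd(A). -/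
open MvPolynomial Pointwise

/-- For `A ⊆ {0,…,g}` with `g = gcd(a,b)`, the ideal `I_A` generated by the
monomials `x^(i·(a/g)) y^(b − i·(b/g))` for `i ∈ A`. -/
noncomputable def IA (K : Type*) [Field K] (a b : ℕ) (A : Finset ℕ) :
    Ideal (MvPolynomial (Fin 2) K) :=
  Ideal.span ((fun i : ℕ =>
    mono K (i * (a / Nat.gcd a b)) (b - i * (b / Nat.gcd a b))) '' (A : Set ℕ))

lemma mono_mul (K : Type*) [Field K] (c d c' d' : ℕ) :
    mono K c d * mono K c' d' = mono K (c + c') (d + d') := by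
  simp only [mono, pow_add]; ring

lemma mono_prod (K : Type*) [Field K] (α β b g : ℕ) (hβ : g * β = b)
    (M : Multiset ℕ) (h : ∀ i ∈ M, i ≤ g) :
    (M.map (fun i => mono K (i * α) (b - i * β))).prod
      = mono K (M.sum * α) (Multiset.card M * b - M.sum * β) := by
  induction M using Multiset.induction_on with
  | empty => simp [mono]
  | cons i M ih =>
    have hiM : ∀ x ∈ M, x ≤ g := fun x hx => h x (Multiset.mem_cons_of_mem hx)
    have hig : i ≤ g := h i (Multiset.mem_cons_self i M)
    rw [Multiset.map_cons, Multiset.prod_cons, ih hiM, mono_mul]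
    congr 1
    · rw [Multiset.sum_cons, add_mul]
    · have h1 : i * β ≤ b := by
        calc i * β ≤ g * β := Nat.mul_le_mul_right β hig
          _ = b := hβ
      have h2 : M.sum * β ≤ Multiset.card M * b := by
        have hs : M.sum ≤ Multiset.card M * g := by
          have := Multiset.sum_le_card_nsmul M g hiM
          simpa [smul_eq_mul] using this
        calc M.sum * β ≤ Multiset.card M * g * β := Nat.mul_le_mul_right β hs
          _ = Multiset.card M * b := by rw [mul_assoc, hβ]
      rw [Multiset.sum_cons, Multiset.card_cons, add_mul, add_mul, one_mul]
      omega

lemma mono_prod_mem (K : Type*) [Field K] (gen : ℕ → MvPolynomial (Fin 2) K)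
    (I : Ideal (MvPolynomial (Fin 2) K)) (A : Finset ℕ)
    (hgen : ∀ i ∈ A, gen i ∈ I)
    (M : Multiset ℕ) (hM : ∀ i ∈ M, i ∈ A) :
    (M.map gen).prod ∈ I ^ Multiset.card M := by
  induction M using Multiset.induction_on with
  | empty => simp
  | cons i M ih =>
    rw [Multiset.map_cons, Multiset.prod_cons, Multiset.card_cons, pow_succ']
    exact Ideal.mul_mem_mul (hgen i (hM i (Multiset.mem_cons_self i M)))
      (ih (fun x hx => hM x (Multiset.mem_cons_of_mem hx)))


lemma list_sum_le {l : List ℕ} {c : ℕ} (h : ∀ x ∈ l, x ≤ c) : l.sum ≤ l.length * c := by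
  induction l with
  | nil => simp
  | cons a t ih =>
    have h1 := ih (fun x hx => h x (List.mem_cons_of_mem _ hx))
    have h2 := h a List.mem_cons_self
    simp only [List.sum_cons, List.length_cons, Nat.succ_mul]
    omega

lemma le_list_sum {l : List ℕ} {c : ℕ} (h : ∀ x ∈ l, c ≤ x) : l.length * c ≤ l.sum := by
  induction l with
  | nil => simp
  | cons a t ih =>
    have h1 := ih (fun x hx => h x (List.mem_cons_of_mem _ hx))
    have h2 := h a List.mem_cons_self
    simp only [List.sum_cons, List.length_cons, Nat.succ_mul]
    omega

lemma comb (g d n : ℕ) (hg : 0 < g) (hd : 0 < d) (hdg : d ∣ g) (hn : n = g / d)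
    (A : Finset ℕ) (h0A : 0 ∈ A) (hgA : g ∈ A)
    (hle : ∀ i ∈ A, i ≤ g) (hdvd : ∀ i ∈ A, d ∣ i)
    (M : Multiset ℕ) (hM : ∀ i ∈ M, i ∈ A) (hc : Multiset.card M = n) :
    ∃ N : Multiset ℕ, (∀ i ∈ N, i ∈ A) ∧ Multiset.card N = n - 1 ∧
      (M.sum = N.sum ∨ M.sum = N.sum + g) := by
  have hgd : n * d = g := by rw [hn]; exact Nat.div_mul_cancel hdg
  have hnpos : 0 < n := by
    rw [hn]; exact Nat.div_pos (Nat.le_of_dvd hg hdg) hd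
  by_cases h0M : 0 ∈ M
  · refine ⟨M.erase 0, fun i hi => hM i (Multiset.mem_of_mem_erase hi), ?_, Or.inl ?_⟩
    · rw [Multiset.card_erase_of_mem h0M, hc]; rfl
    · conv_lhs => rw [← Multiset.cons_erase h0M]
      simp
  by_cases hgM : g ∈ M
  · refine ⟨M.erase g, fun i hi => hM i (Multiset.mem_of_mem_erase hi), ?_, Or.inr ?_⟩
    · rw [Multiset.card_erase_of_mem hgM, hc]; rfl
    · conv_lhs => rw [← Multiset.cons_erase hgM]
      simp [Multiset.sum_cons, Nat.add_comm]
  -- main case: every element lies in [d, g-d]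
  set l := M.toList with hl
  have hlM : ∀ x ∈ l, x ∈ M := fun x hx => (Multiset.mem_toList).1 hx
  have hlen : l.length = n := by rw [hl, Multiset.length_toList, hc]
  have hmemb : ∀ x ∈ l, d ≤ x ∧ x ≤ g - d ∧ d ∣ x := by
    intro x hx
    have hxM := hlM x hx
    have hxA := hM x hxM
    have h1 : d ∣ x := hdvd x hxA
    have h2 : x ≤ g := hle x hxA
    have h3 : x ≠ 0 := fun h => h0M (h ▸ hxM)
    have h4 : x ≠ g := fun h => hgM (h ▸ hxM)
    refine ⟨Nat.le_of_dvd (by omega) h1, ?_, h1⟩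
    obtain ⟨u, rfl⟩ := h1
    obtain ⟨v, rfl⟩ := hdg
    have : u < v := by
      rcases Nat.lt_or_ge u v with h | h
      · exact h
      · exact absurd (Nat.mul_le_mul_left d h) (by omega)
    calc d * u ≤ d * (v - 1) := Nat.mul_le_mul_left d (by omega)
      _ = d * v - d := by rw [Nat.mul_sub, Nat.mul_one]
  have key : ∀ j k : ℕ, j < k → k ≤ n →
      ((l.take j).sum / d) % n = ((l.take k).sum / d) % n →
      ∃ N : Multiset ℕ, (∀ i ∈ N, i ∈ A) ∧ Multiset.card N = n - 1 ∧
        (M.sum = N.sum ∨ M.sum = N.sum + g) := by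
    intro j k hjk hkn heq
    set mid := (l.drop j).take (k - j) with hmid
    have htk : l.take k = l.take j ++ mid := by
      rw [hmid, ← List.take_add]
      congr 1
      omega
    have hmidlen : mid.length = k - j := by
      rw [hmid, List.length_take, List.length_drop, hlen]
      omega
    have hmidmem : ∀ x ∈ mid, x ∈ l := by
      intro x hx
      exact List.mem_of_mem_drop (List.mem_of_mem_take hx)
    have hdvdsum : ∀ t : List ℕ, (∀ x ∈ t, x ∈ l) → d ∣ t.sum := by
      intro t ht
      exact List.dvd_sum (fun x hx => (hmemb x (ht x hx)).2.2)
    have hd1 : d ∣ (l.take j).sum := hdvdsum _ (fun x hx => List.mem_of_mem_take hx)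
    have hd2 : d ∣ mid.sum := hdvdsum _ hmidmem
    obtain ⟨u, hu⟩ := hd1
    obtain ⟨v, hv⟩ := hd2
    have hsum_tk : (l.take k).sum = d * u + d * v := by rw [htk, List.sum_append, hu, hv]
    have hvlow : (k - j) * d ≤ d * v := by
      rw [← hv, ← hmidlen]
      exact le_list_sum (fun x hx => (hmemb x (hmidmem x hx)).1)
    have hvhigh : d * v ≤ (k - j) * (g - d) := by
      rw [← hv, ← hmidlen]
      exact list_sum_le (fun x hx => (hmemb x (hmidmem x hx)).2.1)
    -- from the congruence deduce n ∣ v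
    have hndvd : n ∣ v := by
      have h1 : (l.take j).sum / d = u := by rw [hu]; exact Nat.mul_div_cancel_left u hd
      have h2 : (l.take k).sum / d = u + v := by
        rw [hsum_tk, ← Nat.mul_add]; exact Nat.mul_div_cancel_left _ hd
      rw [h1, h2] at heq
      have : u ≡ u + v [MOD n] := heq
      have h3 := (Nat.modEq_iff_dvd' (Nat.le_add_right u v)).mp this
      simpa using h3
    obtain ⟨m, rfl⟩ := hndvd
    have hmpos : 0 < m := by
      by_contra h
      push_neg at h
      interval_cases m
      simp at hvlow
      omega
    have hmlt : m < k - j := by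
      by_contra h
      push_neg at h
      have h1 : (k - j) * (n * d) ≤ m * (n * d) := Nat.mul_le_mul_right _ h
      have h2 : d * (n * m) = m * (n * d) := by ring
      have h3 : (k - j) * (g - d) < (k - j) * (n * d) :=
        Nat.mul_lt_mul_of_pos_left (by omega) (by omega)
      omega
    -- build N
    set pad := (n - 1) - (j + (n - k) + (m - 1)) with hpad
    refine ⟨(↑(l.take j) : Multiset ℕ) + (↑(l.drop k) : Multiset ℕ)
        + Multiset.replicate (m - 1) g + Multiset.replicate pad 0, ?_, ?_, Or.inr ?_⟩
    · intro i hi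
      simp only [Multiset.mem_add, Multiset.mem_coe, Multiset.mem_replicate] at hi
      rcases hi with ((hi | hi) | hi) | hi
      · exact hM i (hlM i (List.mem_of_mem_take hi))
      · exact hM i (hlM i (List.mem_of_mem_drop hi))
      · rw [hi.2]; exact hgA
      · rw [hi.2]; exact h0A
    · simp only [Multiset.card_add, Multiset.coe_card, Multiset.card_replicate,
        List.length_take, List.length_drop, hlen]
      omega
    · have hMsum : M.sum = l.sum := by rw [hl, Multiset.sum_toList]
      have hlsum : l.sum = (l.take k).sum + (l.drop k).sum := by
        conv_lhs => rw [← List.take_append_drop k l]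
        rw [List.sum_append]
      simp only [Multiset.sum_add, Multiset.sum_coe, Multiset.sum_replicate, smul_eq_mul,
        Nat.mul_zero, Nat.add_zero]
      rw [hMsum, hlsum, hsum_tk, hu]
      have h1 : d * (n * m) = m * g := by rw [← hgd]; ring
      have h2 : (m - 1) * g = m * g - g := by rw [Nat.sub_one_mul]
      have h3 : g ≤ m * g := Nat.le_mul_of_pos_left g hmpos
      omega
  -- pigeonhole
  obtain ⟨j, hj, k, hk, hjk, heq⟩ :=
    Finset.exists_ne_map_eq_of_card_lt_of_maps_to (s := Finset.range (n + 1))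
      (t := Finset.range n) (by simp)
      (f := fun j => ((l.take j).sum / d) % n)
      (fun x _ => Finset.mem_range.2 (Nat.mod_lt _ hnpos))
  rcases Nat.lt_or_ge j k with h | h
  · exact key j k h (by simp at hk; omega) heq
  · exact key k j (by omega) (by simp at hj; omega) heq.symm

theorem stmt1 (K : Type*) [Field K] (a b : ℕ) (ha : 0 < a) (hb : 0 < b)
    (A : Finset ℕ) (hA1 : ({0, Nat.gcd a b} : Finset ℕ) ⊆ A)
    (hA2 : A ⊆ Finset.range (Nat.gcd a b + 1)) :
    IA K a b A ^ (Nat.gcd a b / A.gcd id)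
      = Jab K a b * IA K a b A ^ (Nat.gcd a b / A.gcd id - 1) := by
  set g := Nat.gcd a b with hgdef
  set α := a / g with hα
  set β := b / g with hβ
  set d := A.gcd id with hddef
  set n := g / d with hndef
  set gen : ℕ → MvPolynomial (Fin 2) K := fun i => mono K (i * α) (b - i * β) with hgen
  have hg : 0 < g := Nat.gcd_pos_of_pos_left b ha
  have hgα : g * α = a := Nat.mul_div_cancel' (Nat.gcd_dvd_left a b)
  have hgβ : g * β = b := Nat.mul_div_cancel' (Nat.gcd_dvd_right a b)
  have hgA : g ∈ A := hA1 (by simp)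
  have h0A : 0 ∈ A := hA1 (by simp)
  have hdvd : ∀ i ∈ A, d ∣ i := fun i hi => Finset.gcd_dvd hi
  have hdg : d ∣ g := hdvd g hgA
  have hd0 : 0 < d := by
    rcases Nat.eq_zero_or_pos d with h | h
    · exfalso; have := hdg; rw [h] at this; omega
    · exact h
  have hn1 : 1 ≤ n := Nat.div_pos (Nat.le_of_dvd hg hdg) hd0
  have hle : ∀ i ∈ A, i ≤ g := fun i hi =>
    Nat.lt_succ_iff.mp (Finset.mem_range.mp (hA2 hi))
  have hgenI : ∀ i ∈ A, gen i ∈ IA K a b A := fun i hi =>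
    Ideal.subset_span ⟨i, hi, rfl⟩
  have hIA : IA K a b A = Ideal.span (gen '' (A : Set ℕ)) := rfl
  apply le_antisymm
  · -- hard direction
    rw [hIA, Ideal.span, Submodule.span_pow]
    rw [show Submodule.span (MvPolynomial (Fin 2) K) ((gen '' (A : Set ℕ)) ^ n)
        = Ideal.span ((gen '' (A : Set ℕ)) ^ n) from rfl, Ideal.span_le]
    intro x hx
    rw [Set.mem_pow] at hx
    obtain ⟨f, hf⟩ := hx
    have hmem : ∀ i : Fin n, ∃ j, j ∈ A ∧ gen j = (f i : MvPolynomial (Fin 2) K) := by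
      intro i
      obtain ⟨j, hj1, hj2⟩ := (f i).2
      exact ⟨j, hj1, hj2⟩
    choose idx hidxA hidx using hmem
    set M : Multiset ℕ := (↑(List.ofFn idx) : Multiset ℕ) with hM
    have hMA : ∀ i ∈ M, i ∈ A := by
      intro i hi
      rw [hM, Multiset.mem_coe, List.mem_ofFn] at hi
      obtain ⟨k, rfl⟩ := hi
      exact hidxA k
    have hMcard : Multiset.card M = n := by
      rw [hM, Multiset.coe_card, List.length_ofFn]
    have hxM : x = (M.map gen).prod := by
      rw [hM, Multiset.map_coe, Multiset.prod_coe, List.map_ofFn, ← hf]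
      congr 1
      simp only [List.ofFn_inj]
      funext i
      exact (hidx i).symm
    have hMle : ∀ i ∈ M, i ≤ g := fun i hi => hle i (hMA i hi)
    have hxval : x = mono K (M.sum * α) (n * b - M.sum * β) := by
      rw [hxM, hgen, mono_prod K α β b g hgβ M hMle, hMcard]
    obtain ⟨N, hNA, hNcard, hNsum⟩ :=
      comb g d n hg hd0 hdg hndef A h0A hgA hle hdvd M hMA hMcard
    have hNle : ∀ i ∈ N, i ≤ g := fun i hi => hle i (hNA i hi)
    have hNprod : (N.map gen).prod = mono K (N.sum * α) ((n - 1) * b - N.sum * β) := by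
      rw [hgen, mono_prod K α β b g hgβ N hNle, hNcard]
    have hNmem : (N.map gen).prod ∈ IA K a b A ^ (n - 1) := by
      have := mono_prod_mem K gen (IA K a b A) A hgenI N hNA
      rwa [hNcard] at this
    have hNsb : N.sum * β ≤ (n - 1) * b := by
      have hs : N.sum ≤ (n - 1) * g := by
        have := Multiset.sum_le_card_nsmul N g hNle
        rw [hNcard] at this
        simpa [smul_eq_mul] using this
      calc N.sum * β ≤ (n - 1) * g * β := Nat.mul_le_mul_right β hs
        _ = (n - 1) * b := by rw [mul_assoc, hgβ]
    have hnb : n * b = (n - 1) * b + b := by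
      have h1 : n - 1 + 1 = n := by omega
      calc n * b = (n - 1 + 1) * b := by rw [h1]
        _ = (n - 1) * b + b := by rw [add_mul, one_mul]
    rcases hNsum with hcase | hcase
    · -- x = y^b * (N.map gen).prod
      have hxeq : x = mono K 0 b * (N.map gen).prod := by
        have e1 : M.sum * α = 0 + N.sum * α := by rw [hcase, zero_add]
        have e2 : n * b - M.sum * β = b + ((n - 1) * b - N.sum * β) := by
          rw [hcase]; omega
        rw [hxval, hNprod, mono_mul, e1, e2]
      rw [hxeq]
      exact Ideal.mul_mem_mul
        (Ideal.subset_span (Set.mem_insert_iff.mpr (Or.inr rfl))) hNmem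
    · -- x = x^a * (N.map gen).prod
      have hsum_mul : M.sum * β = N.sum * β + b := by
        rw [hcase, add_mul, hgβ]
      have hsum_mul' : M.sum * α = a + N.sum * α := by
        rw [hcase, add_mul, hgα, Nat.add_comm]
      have hxeq : x = mono K a 0 * (N.map gen).prod := by
        have e2 : n * b - M.sum * β = 0 + ((n - 1) * b - N.sum * β) := by
          rw [zero_add]; omega
        rw [hxval, hNprod, mono_mul, hsum_mul', e2]
      rw [hxeq]
      exact Ideal.mul_mem_mul
        (Ideal.subset_span (Set.mem_insert_iff.mpr (Or.inl rfl))) hNmem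
  · -- easy direction
    have hJI : Jab K a b ≤ IA K a b A := by
      rw [Jab, Ideal.span_le]
      rintro x (rfl | rfl)
      · have : mono K a 0 = gen g := by
          rw [hgen]
          congr 1
          · rw [hgα]
          · rw [hgβ]; omega
        rw [this]
        exact hgenI g hgA
      · have : mono K 0 b = gen 0 := by
          rw [hgen]
          congr 1 <;> simp
        rw [this]
        exact hgenI 0 h0A
    calc Jab K a b * IA K a b A ^ (n - 1)
        ≤ IA K a b A * IA K a b A ^ (n - 1) := Ideal.mul_mono_left hJI
      _ = IA K a b A ^ n := by
          rw [← pow_succ']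
          congr 1
          omega
end

section
/- Let K be a field, a, b positive integers with g = gcd(a,b) ≥ 2, and let j be an integer with 1 ≤ j ≤ g − 1. Let A = {0,1} ∪ {j+1, j+2, …, g}, I = I_A and J = (x^a, y^b). Then I^{j+1} = J·I^j and I^j ≠ J·I^{j−1}; that is, the reduction number of I with respect to J equals j. -/
open MvPolynomial

open Pointwise

namespace Stmt3Aux



/-- `SumRep g j n s`: `s` is the sum of `n` elements of `A = {0,1} ∪ [j+1, g]`. -/
def SumRep (g j n s : ℕ) : Prop :=
  ∃ m : Multiset ℕ, Multiset.card m = n ∧ (∀ i ∈ m, i = 0 ∨ i = 1 ∨ (j + 1 ≤ i ∧ i ≤ g)) ∧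
    m.sum = s

lemma C1 (g j : ℕ) (hjg : j + 1 ≤ g) :
    ∀ n k s, k ≤ n → k * (j + 1) ≤ s → s + k ≤ k * g + n → SumRep g j n s := by
  intro n
  induction n with
  | zero =>
    intro k s hk h1 h2
    interval_cases k
    have hs : s = 0 := by omega
    exact ⟨0, rfl, by simp, by simp [hs]⟩
  | succ n ih =>
    intro k s hk h1 h2
    cases k with
    | zero =>
      simp only [Nat.zero_mul, Nat.zero_add, Nat.add_zero] at h1 h2
      obtain ⟨m, hc, hA, hs⟩ := ih 0 (s - min 1 s) (by omega) (by omega) (by omega)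
      refine ⟨(min 1 s) ::ₘ m, by simp [hc], ?_, ?_⟩
      · intro i hi
        rcases Multiset.mem_cons.mp hi with h | h
        · omega
        · exact hA i h
      · simp only [Multiset.sum_cons, hs]; omega
    | succ k =>
      have e1 : (k+1) * (j+1) = k * (j+1) + (j+1) := by ring
      have e2 : (k+1) * g = k * g + g := by ring
      rw [e1] at h1
      rw [e2] at h2
      rcases le_or_gt g (s - k * (j+1)) with hcase | hcase
      · -- t = g
        obtain ⟨m, hc, hA, hs⟩ := ih k (s - g) (by omega) (by omega) (by omega)
        refine ⟨g ::ₘ m, by simp [hc], ?_, ?_⟩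
        · intro i hi
          rcases Multiset.mem_cons.mp hi with h | h
          · subst h; right; right; omega
          · exact hA i h
        · simp only [Multiset.sum_cons, hs]; omega
      · -- t = s - k*(j+1)
        have hmul : k * (j+1) ≤ k * g := Nat.mul_le_mul_left _ hjg
        obtain ⟨m, hc, hA, hs⟩ := ih k (k * (j+1)) (by omega) (by omega) (by omega)
        refine ⟨(s - k * (j+1)) ::ₘ m, by simp [hc], ?_, ?_⟩
        · intro i hi
          rcases Multiset.mem_cons.mp hi with h | h
          · subst h; right; right; omega
          · exact hA i h
        · simp only [Multiset.sum_cons, hs]; omega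

lemma C2 (g j : ℕ) :
    ∀ m : Multiset ℕ, (∀ i ∈ m, i = 0 ∨ i = 1 ∨ (j + 1 ≤ i ∧ i ≤ g)) →
      ∃ k ≤ Multiset.card m, k * (j + 1) ≤ m.sum ∧ m.sum + k ≤ k * g + Multiset.card m := by
  intro m
  induction m using Multiset.induction_on with
  | empty => intro _; exact ⟨0, by simp⟩
  | cons i m ih =>
    intro hA
    obtain ⟨k, hk, h1, h2⟩ := ih (fun x hx => hA x (Multiset.mem_cons_of_mem hx))
    simp only [Multiset.sum_cons, Multiset.card_cons]
    rcases hA i (Multiset.mem_cons_self i m) with h | h | h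
    · exact ⟨k, by omega, by omega, by omega⟩
    · exact ⟨k, by omega, by omega, by omega⟩
    · refine ⟨k + 1, by omega, ?_, ?_⟩
      · have : (k+1) * (j+1) = k * (j+1) + (j+1) := by ring
        omega
      · have : (k+1) * g = k * g + g := by ring
        omega

lemma sum_le (g j : ℕ) (m : Multiset ℕ)
    (hA : ∀ i ∈ m, i = 0 ∨ i = 1 ∨ (j + 1 ≤ i ∧ i ≤ g)) (hjg : j + 1 ≤ g) :
    m.sum ≤ Multiset.card m * g := by
  have := Multiset.sum_le_card_nsmul m g (fun x hx => by rcases hA x hx with h|h|h <;> omega)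
  simpa [smul_eq_mul] using this

/-- the no-gap lemma when `g ≥ j+2` -/
lemma nogap (g j s : ℕ) (hj : 1 ≤ j) (hg : j + 2 ≤ g) (hs : s ≤ j * g) :
    ∃ k ≤ j, k * (j + 1) ≤ s ∧ s + k ≤ k * g + j := by
  have hdm := Nat.div_add_mod s (j+1)
  have hmlt : s % (j+1) < j + 1 := Nat.mod_lt _ (by omega)
  rcases le_or_gt j (s / (j+1)) with h | h
  · refine ⟨j, le_rfl, ?_, by omega⟩
    calc j * (j+1) ≤ (s / (j+1)) * (j+1) := Nat.mul_le_mul_right _ h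
    _ = (j+1) * (s / (j+1)) := by ring
    _ ≤ s := by omega
  · refine ⟨s / (j+1), by omega, ?_, ?_⟩
    · have : (s / (j+1)) * (j+1) = (j+1) * (s / (j+1)) := by ring
      omega
    · have h2 : (s / (j+1)) * (j + 2) ≤ (s / (j+1)) * g := Nat.mul_le_mul_left _ hg
      have e2 : (s / (j+1)) * (j+2) = (j+1) * (s / (j+1)) + s / (j+1) := by ring
      omega

/-- The key inclusion: a sum of `j+1` elements is a sum of `j` elements, or `g` plus one. -/
lemma KEY (g j s : ℕ) (hj : 1 ≤ j) (hjg : j + 1 ≤ g)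
    (h : SumRep g j (j+1) s) :
    SumRep g j j s ∨ (g ≤ s ∧ SumRep g j j (s - g)) := by
  obtain ⟨m, hc, hA, hs⟩ := h
  obtain ⟨k, hk, h1, h2⟩ := C2 g j m hA
  rw [hc] at hk h2
  rw [hs] at h1 h2
  clear hc hA hs m
  -- now pure arithmetic; produce interval data and use C1
  have main : (∃ k' ≤ j, k' * (j+1) ≤ s ∧ s + k' ≤ k' * g + j) ∨
      (g ≤ s ∧ ∃ k' ≤ j, k' * (j+1) ≤ s - g ∧ (s - g) + k' ≤ k' * g + j) := by
    cases k with
    | zero =>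
      simp only [Nat.zero_mul, Nat.zero_add, Nat.add_zero] at h1 h2
      rcases le_or_gt s j with h | h
      · exact Or.inl ⟨0, by omega, by omega, by omega⟩
      · exact Or.inl ⟨1, by omega, by omega, by omega⟩
    | succ k =>
      have e1 : (k+1) * (j+1) = k * (j+1) + (j+1) := by ring
      have e2 : (k+1) * g = k * g + g := by ring
      rw [e1] at h1; rw [e2] at h2
      rcases le_or_gt (k+1) j with hkj | hkj
      · rcases le_or_gt (s + (k+1)) ((k+1) * g + j) with hcs | hcs
        · rw [e2] at hcs
          exact Or.inl ⟨k+1, hkj, by rw [e1]; omega, by rw [e2]; omega⟩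
        · rw [e2] at hcs
          have hmul : k * (j+1) ≤ k * g := Nat.mul_le_mul_left _ hjg
          have ekj : k * (j + 1) = k * j + k := by ring
          exact Or.inr ⟨by omega, k, by omega, by omega, by omega⟩
      · have hkj' : k = j := by omega
        have ea : k * (j+1) = j * (j+1) := by rw [hkj']
        have eb : k * g = j * g := by rw [hkj']
        have egj : g ≤ j * g := Nat.le_mul_of_pos_left g hj
        rcases le_or_gt s (j * g) with hcs | hcs
        · exact Or.inl ⟨j, le_rfl, by omega, by omega⟩
        · rcases eq_or_lt_of_le hjg with hgj | hgj
          · have ee : j * g = j * (j+1) := by rw [← hgj]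
            exact Or.inr ⟨by omega, j, le_rfl, by omega, by omega⟩
          · have hsg : s - g ≤ j * g := by omega
            obtain ⟨k', hk', a1, a2⟩ := nogap g j (s - g) hj (by omega) hsg
            exact Or.inr ⟨by omega, k', hk', a1, a2⟩
  rcases main with ⟨k', hk', a1, a2⟩ | ⟨hgs, k', hk', a1, a2⟩
  · exact Or.inl (C1 g j hjg j k' s hk' a1 a2)
  · exact Or.inr ⟨hgs, C1 g j hjg j k' (s - g) hk' a1 a2⟩


variable {K : Type*} [Field K]

/-- exponent vector -/
noncomputable def D (c d : ℕ) : Fin 2 →₀ ℕ := Finsupp.single 0 c + Finsupp.single 1 d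

lemma D_apply0 (c d : ℕ) : D c d 0 = c := by
  simp [D, Finsupp.single_apply]

lemma D_apply1 (c d : ℕ) : D c d 1 = d := by
  simp [D, Finsupp.single_apply]

lemma mono_eq_monomial (c d : ℕ) : mono K c d = monomial (D c d) 1 := by
  rw [mono, X_pow_eq_monomial, X_pow_eq_monomial, monomial_mul, one_mul, D]

lemma mono_mul (c d c' d' : ℕ) :
    mono K c d * mono K c' d' = mono K (c + c') (d + d') := by
  simp only [mono, pow_add]; ring

lemma mono_zero_zero : mono K 0 0 = 1 := by simp [mono]

/-- `span S ^ n = span (S ^ n)` -/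
lemma span_pow (S : Set (MvPolynomial (Fin 2) K)) (n : ℕ) :
    Ideal.span S ^ n = Ideal.span (S ^ n) := by
  induction n with
  | zero =>
      rw [pow_zero, pow_zero]
      have h1 : (1 : Set (MvPolynomial (Fin 2) K)) = {1} := rfl
      rw [h1, Ideal.span_singleton_one, Ideal.one_eq_top]
  | succ n ih => rw [pow_succ, pow_succ, ih, Ideal.span_mul_span']

/-- generators of `I_A` -/
noncomputable def gens (K : Type*) [Field K] (a b : ℕ) (i : ℕ) : MvPolynomial (Fin 2) K :=
  mono K (i * (a / Nat.gcd a b)) (b - i * (b / Nat.gcd a b))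

lemma IA_eq (a b : ℕ) (A : Finset ℕ) :
    IA K a b A = Ideal.span (gens K a b '' (A : Set ℕ)) := rfl

/-- product of the generators indexed by a multiset -/
noncomputable def P (K : Type*) [Field K] (a b : ℕ) (m : Multiset ℕ) :
    MvPolynomial (Fin 2) K :=
  (m.map (gens K a b)).prod

section Params

variable (a b : ℕ) (ha : 0 < a) (hb : 0 < b)

lemma gcd_mul_p : Nat.gcd a b * (a / Nat.gcd a b) = a :=
  Nat.mul_div_cancel' (Nat.gcd_dvd_left a b)

lemma gcd_mul_q : Nat.gcd a b * (b / Nat.gcd a b) = b :=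
  Nat.mul_div_cancel' (Nat.gcd_dvd_right a b)

lemma gens_eq {i : ℕ} (hi : i ≤ Nat.gcd a b) :
    gens K a b i =
      mono K (i * (a / Nat.gcd a b)) ((Nat.gcd a b - i) * (b / Nat.gcd a b)) := by
  rw [gens, Nat.sub_mul, gcd_mul_q]

lemma P_eq (m : Multiset ℕ) (hA : ∀ i ∈ m, i ≤ Nat.gcd a b) :
    P K a b m = mono K (m.sum * (a / Nat.gcd a b))
      ((Multiset.card m * Nat.gcd a b - m.sum) * (b / Nat.gcd a b)) := by
  induction m using Multiset.induction_on with
  | empty => simp [P, mono_zero_zero]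
  | cons i m ih =>
      have hi : i ≤ Nat.gcd a b := hA i (Multiset.mem_cons_self i m)
      have hsum : m.sum ≤ Multiset.card m * Nat.gcd a b := by
        have := Multiset.sum_le_card_nsmul m (Nat.gcd a b)
          (fun x hx => hA x (Multiset.mem_cons_of_mem hx))
        simpa [smul_eq_mul] using this
      have ih' := ih (fun x hx => hA x (Multiset.mem_cons_of_mem hx))
      have e1 : i + m.sum = (i ::ₘ m).sum := (Multiset.sum_cons i m).symm
      have e2 : Nat.gcd a b - i + (Multiset.card m * Nat.gcd a b - m.sum)
          = Multiset.card (i ::ₘ m) * Nat.gcd a b - (i ::ₘ m).sum := by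
        rw [Multiset.card_cons, Multiset.sum_cons]
        have e : (Multiset.card m + 1) * Nat.gcd a b
            = Multiset.card m * Nat.gcd a b + Nat.gcd a b := by ring
        omega
      rw [P, Multiset.map_cons, Multiset.prod_cons, ← P, ih', gens_eq a b hi, mono_mul,
        ← Nat.add_mul, ← Nat.add_mul, e1, e2]

lemma P_mem (A : Finset ℕ) (m : Multiset ℕ) (hA : ∀ i ∈ m, i ∈ A) :
    P K a b m ∈ IA K a b A ^ (Multiset.card m) := by
  induction m using Multiset.induction_on with
  | empty => simp [P]
  | cons i m ih =>
      rw [P, Multiset.map_cons, Multiset.prod_cons, ← P, Multiset.card_cons, pow_succ']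
      exact Ideal.mul_mem_mul
        (Ideal.subset_span ⟨i, hA i (Multiset.mem_cons_self i m), rfl⟩)
        (ih (fun x hx => hA x (Multiset.mem_cons_of_mem hx)))

lemma pow_le_span (A : Finset ℕ) (n : ℕ) :
    IA K a b A ^ n ≤ Ideal.span
      {x : MvPolynomial (Fin 2) K |
        ∃ m : Multiset ℕ, Multiset.card m = n ∧ (∀ i ∈ m, i ∈ A) ∧ x = P K a b m} := by
  rw [IA_eq, span_pow]
  apply Ideal.span_mono
  intro x hx
  rw [Set.mem_pow] at hx
  obtain ⟨f, hf⟩ := hx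
  have hmem : ∀ i, (f i : MvPolynomial (Fin 2) K) ∈ gens K a b '' (A : Set ℕ) :=
    fun i => (f i).2
  choose c hc1 hc2 using hmem
  refine ⟨Multiset.map c Finset.univ.val, by simp, ?_, ?_⟩
  · intro i hi
    obtain ⟨i0, _, rfl⟩ := Multiset.mem_map.mp hi
    exact hc1 i0
  · rw [← hf, List.prod_ofFn]
    have : ∀ i, (f i : MvPolynomial (Fin 2) K) = gens K a b (c i) := fun i => (hc2 i).symm
    simp_rw [this]
    rw [P, Multiset.map_map]
    rw [Finset.prod_eq_multiset_prod]
    rfl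

end Params


section Main

variable {K : Type*} [Field K]

lemma part1 (a b : ℕ) (ha : 0 < a) (hb : 0 < b)
    (hg : 2 ≤ Nat.gcd a b) (j : ℕ) (hj1 : 1 ≤ j) (hj2 : j ≤ Nat.gcd a b - 1) :
    IA K a b (({0, 1} : Finset ℕ) ∪ Finset.Icc (j + 1) (Nat.gcd a b)) ^ (j + 1)
      = Jab K a b *
        IA K a b (({0, 1} : Finset ℕ) ∪ Finset.Icc (j + 1) (Nat.gcd a b)) ^ j := by
  have hjg : j + 1 ≤ Nat.gcd a b := by omega
  have hgp : Nat.gcd a b * (a / Nat.gcd a b) = a := gcd_mul_p a b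
  have hgq : Nat.gcd a b * (b / Nat.gcd a b) = b := gcd_mul_q a b
  have memA : ∀ i : ℕ, i ∈ (({0, 1} : Finset ℕ) ∪ Finset.Icc (j + 1) (Nat.gcd a b)) ↔
      (i = 0 ∨ i = 1 ∨ (j + 1 ≤ i ∧ i ≤ Nat.gcd a b)) := by
    intro i
    simp [Finset.mem_union, Finset.mem_insert, Finset.mem_Icc]
  have ejg : (j + 1) * Nat.gcd a b = j * Nat.gcd a b + Nat.gcd a b := by ring
  apply le_antisymm
  · refine le_trans (pow_le_span a b _ (j + 1)) (Ideal.span_le.mpr ?_)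
    rintro x ⟨m, hcard, hAm, rfl⟩
    have hAm' : ∀ i ∈ m, i = 0 ∨ i = 1 ∨ (j + 1 ≤ i ∧ i ≤ Nat.gcd a b) :=
      fun i hi => (memA i).mp (hAm i hi)
    have hle : ∀ i ∈ m, i ≤ Nat.gcd a b := fun i hi => by
      rcases hAm' i hi with h | h | h <;> omega
    have hx : P K a b m = mono K (m.sum * (a / Nat.gcd a b))
        (((j + 1) * Nat.gcd a b - m.sum) * (b / Nat.gcd a b)) := by
      rw [P_eq a b m hle, hcard]
    rcases KEY (Nat.gcd a b) j m.sum hj1 hjg ⟨m, hcard, hAm', rfl⟩ with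
      ⟨m', hc', hA2, hs'⟩ | ⟨hgs, m', hc', hA2, hs'⟩
    · -- x = y^b * P m'
      have hle' : ∀ i ∈ m', i ≤ Nat.gcd a b := fun i hi => by
        rcases hA2 i hi with h | h | h <;> omega
      have hsle : m.sum ≤ j * Nat.gcd a b := by
        have := sum_le (Nat.gcd a b) j m' hA2 hjg; rw [hc', hs'] at this; exact this
      have hP' : P K a b m' = mono K (m.sum * (a / Nat.gcd a b))
          ((j * Nat.gcd a b - m.sum) * (b / Nat.gcd a b)) := by
        rw [P_eq a b m' hle', hc', hs']
      have ey : b + (j * Nat.gcd a b - m.sum) * (b / Nat.gcd a b)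
          = ((j + 1) * Nat.gcd a b - m.sum) * (b / Nat.gcd a b) := by
        have e3 : (j + 1) * Nat.gcd a b - m.sum
            = Nat.gcd a b + (j * Nat.gcd a b - m.sum) := by omega
        rw [e3, Nat.add_mul, hgq]
      have key : P K a b m = mono K 0 b * P K a b m' := by
        rw [hx, hP', mono_mul, Nat.zero_add, ey]
      rw [key]
      refine Ideal.mul_mem_mul (Ideal.subset_span (by right; rfl)) ?_
      have hmem := P_mem (K := K) a b _ m' (fun i hi => (memA i).mpr (hA2 i hi))
      rwa [hc'] at hmem
    · -- x = x^a * P m'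
      have hle' : ∀ i ∈ m', i ≤ Nat.gcd a b := fun i hi => by
        rcases hA2 i hi with h | h | h <;> omega
      have hsle : m.sum - Nat.gcd a b ≤ j * Nat.gcd a b := by
        have := sum_le (Nat.gcd a b) j m' hA2 hjg; rw [hc', hs'] at this; exact this
      have hP' : P K a b m' = mono K ((m.sum - Nat.gcd a b) * (a / Nat.gcd a b))
          ((j * Nat.gcd a b - (m.sum - Nat.gcd a b)) * (b / Nat.gcd a b)) := by
        rw [P_eq a b m' hle', hc', hs']
      have ex : a + (m.sum - Nat.gcd a b) * (a / Nat.gcd a b)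
          = m.sum * (a / Nat.gcd a b) := by
        have e3 : m.sum * (a / Nat.gcd a b)
            = (Nat.gcd a b + (m.sum - Nat.gcd a b)) * (a / Nat.gcd a b) := by
          congr 1
          omega
        rw [e3, Nat.add_mul, hgp]
      have ey : j * Nat.gcd a b - (m.sum - Nat.gcd a b)
          = (j + 1) * Nat.gcd a b - m.sum := by omega
      have key : P K a b m = mono K a 0 * P K a b m' := by
        rw [hx, hP', mono_mul, ex, Nat.zero_add, ey]
      rw [key]
      refine Ideal.mul_mem_mul (Ideal.subset_span (by left; rfl)) ?_
      have hmem := P_mem (K := K) a b _ m' (fun i hi => (memA i).mpr (hA2 i hi))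
      rwa [hc'] at hmem
  · -- ⊇ : J ≤ I
    have hJI : Jab K a b ≤ IA K a b (({0, 1} : Finset ℕ) ∪ Finset.Icc (j + 1) (Nat.gcd a b)) := by
      rw [Jab, IA_eq, Ideal.span_le]
      rintro x hx
      rcases Set.mem_insert_iff.mp hx with rfl | hx
      · refine Ideal.subset_span ⟨Nat.gcd a b,
          (memA _).mpr (Or.inr (Or.inr ⟨hjg, le_rfl⟩)), ?_⟩
        rw [gens, hgp, hgq, Nat.sub_self]
      · rcases Set.mem_singleton_iff.mp hx with rfl
        refine Ideal.subset_span ⟨0, (memA _).mpr (Or.inl rfl), ?_⟩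
        simp [gens]
    calc Jab K a b * IA K a b (({0, 1} : Finset ℕ) ∪ Finset.Icc (j + 1) (Nat.gcd a b)) ^ j
        ≤ IA K a b (({0, 1} : Finset ℕ) ∪ Finset.Icc (j + 1) (Nat.gcd a b)) *
          IA K a b (({0, 1} : Finset ℕ) ∪ Finset.Icc (j + 1) (Nat.gcd a b)) ^ j :=
          Ideal.mul_mono hJI le_rfl
      _ = IA K a b (({0, 1} : Finset ℕ) ∪ Finset.Icc (j + 1) (Nat.gcd a b)) ^ (j + 1) :=
          (pow_succ' _ _).symm

lemma part2 (a b : ℕ) (ha : 0 < a) (hb : 0 < b)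
    (hg : 2 ≤ Nat.gcd a b) (j : ℕ) (hj1 : 1 ≤ j) (hj2 : j ≤ Nat.gcd a b - 1) :
    IA K a b (({0, 1} : Finset ℕ) ∪ Finset.Icc (j + 1) (Nat.gcd a b)) ^ j
      ≠ Jab K a b *
        IA K a b (({0, 1} : Finset ℕ) ∪ Finset.Icc (j + 1) (Nat.gcd a b)) ^ (j - 1) := by
  intro heq
  have hjg : j + 1 ≤ Nat.gcd a b := by omega
  have hgp : Nat.gcd a b * (a / Nat.gcd a b) = a := gcd_mul_p a b
  have hgq : Nat.gcd a b * (b / Nat.gcd a b) = b := gcd_mul_q a b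
  have hp : 0 < a / Nat.gcd a b :=
    Nat.div_pos (Nat.le_of_dvd ha (Nat.gcd_dvd_left a b)) (by omega)
  have hq : 0 < b / Nat.gcd a b :=
    Nat.div_pos (Nat.le_of_dvd hb (Nat.gcd_dvd_right a b)) (by omega)
  have memA : ∀ i : ℕ, i ∈ (({0, 1} : Finset ℕ) ∪ Finset.Icc (j + 1) (Nat.gcd a b)) ↔
      (i = 0 ∨ i = 1 ∨ (j + 1 ≤ i ∧ i ≤ Nat.gcd a b)) := by
    intro i
    simp [Finset.mem_union, Finset.mem_insert, Finset.mem_Icc]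
  have ejg : (j - 1) * Nat.gcd a b + Nat.gcd a b = j * Nat.gcd a b := by
    have h1 : j - 1 + 1 = j := by omega
    calc (j - 1) * Nat.gcd a b + Nat.gcd a b = ((j - 1) + 1) * Nat.gcd a b := by ring
      _ = j * Nat.gcd a b := by rw [h1]
  -- the witness
  have hw1 : P K a b (Multiset.replicate j 1)
      ∈ IA K a b (({0, 1} : Finset ℕ) ∪ Finset.Icc (j + 1) (Nat.gcd a b)) ^ j := by
    have := P_mem (K := K) a b _ (Multiset.replicate j 1) (fun i hi => by
      rw [Multiset.eq_of_mem_replicate hi]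
      exact (memA 1).mpr (Or.inr (Or.inl rfl)))
    rwa [Multiset.card_replicate] at this
  have hweq : P K a b (Multiset.replicate j 1) = mono K (j * (a / Nat.gcd a b))
      ((j * Nat.gcd a b - j) * (b / Nat.gcd a b)) := by
    have := P_eq (K := K) a b (Multiset.replicate j 1) (fun i hi => by
      rw [Multiset.eq_of_mem_replicate hi]; omega)
    rwa [Multiset.card_replicate, Multiset.sum_replicate, smul_eq_mul, mul_one] at this
  rw [heq] at hw1
  -- bound J * I^(j-1) by a monomial ideal
  set T : Set (Fin 2 →₀ ℕ) := {e | ∃ t : ℕ,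
    ((t + 1 ≤ j ∨ j + 1 ≤ t) ∧ t ≤ j * Nat.gcd a b) ∧
      e = D (t * (a / Nat.gcd a b)) ((j * Nat.gcd a b - t) * (b / Nat.gcd a b))} with hT
  have hbound : Jab K a b *
      IA K a b (({0, 1} : Finset ℕ) ∪ Finset.Icc (j + 1) (Nat.gcd a b)) ^ (j - 1)
      ≤ Ideal.span ((fun e => monomial e (1 : K)) '' T) := by
    rw [Jab]
    refine le_trans (Ideal.mul_mono_right (pow_le_span a b _ (j - 1))) ?_
    rw [Ideal.span_mul_span']
    rw [Ideal.span_le]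
    rintro z hz
    rw [Set.mem_mul] at hz
    obtain ⟨u, hu, v, ⟨m', hc', hA2, rfl⟩, rfl⟩ := hz
    have hA3 : ∀ i ∈ m', i = 0 ∨ i = 1 ∨ (j + 1 ≤ i ∧ i ≤ Nat.gcd a b) :=
      fun i hi => (memA i).mp (hA2 i hi)
    have hle' : ∀ i ∈ m', i ≤ Nat.gcd a b := fun i hi => by
      rcases hA3 i hi with h | h | h <;> omega
    have hsle : m'.sum ≤ (j - 1) * Nat.gcd a b := by
      have := sum_le (Nat.gcd a b) j m' hA3 hjg; rwa [hc'] at this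
    have hP' : P K a b m' = mono K (m'.sum * (a / Nat.gcd a b))
        (((j - 1) * Nat.gcd a b - m'.sum) * (b / Nat.gcd a b)) := by
      rw [P_eq a b m' hle', hc']
    rcases Set.mem_insert_iff.mp hu with rfl | hu
    · -- u = x^a
      have ex : a + m'.sum * (a / Nat.gcd a b)
          = (m'.sum + Nat.gcd a b) * (a / Nat.gcd a b) := by
        rw [Nat.add_mul]
        omega
      have ey : (j - 1) * Nat.gcd a b - m'.sum
          = j * Nat.gcd a b - (m'.sum + Nat.gcd a b) := by omega
      have hz2 : mono K a 0 * P K a b m'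
          = mono K ((m'.sum + Nat.gcd a b) * (a / Nat.gcd a b))
            ((j * Nat.gcd a b - (m'.sum + Nat.gcd a b)) * (b / Nat.gcd a b)) := by
        rw [hP', mono_mul, Nat.zero_add, ex, ey]
      refine Ideal.subset_span ⟨_, ⟨m'.sum + Nat.gcd a b,
        ⟨Or.inr (by omega), by omega⟩, rfl⟩, ?_⟩
      exact (mono_eq_monomial _ _).symm.trans hz2.symm
    · -- u = y^b
      rcases Set.mem_singleton_iff.mp hu with rfl
      have ey : b + ((j - 1) * Nat.gcd a b - m'.sum) * (b / Nat.gcd a b)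
          = (j * Nat.gcd a b - m'.sum) * (b / Nat.gcd a b) := by
        have e3 : j * Nat.gcd a b - m'.sum
            = Nat.gcd a b + ((j - 1) * Nat.gcd a b - m'.sum) := by omega
        rw [e3, Nat.add_mul, hgq]
      have hz2 : mono K 0 b * P K a b m'
          = mono K (m'.sum * (a / Nat.gcd a b))
            ((j * Nat.gcd a b - m'.sum) * (b / Nat.gcd a b)) := by
        rw [hP', mono_mul, Nat.zero_add, ey]
      have hcond : m'.sum + 1 ≤ j ∨ j + 1 ≤ m'.sum := by
        obtain ⟨k, hk, hk1, hk2⟩ := C2 (Nat.gcd a b) j m' hA3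
        rw [hc'] at hk hk2
        rcases Nat.eq_zero_or_pos k with rfl | hkpos
        · left; omega
        · right
          have : 1 * (j + 1) ≤ k * (j + 1) := Nat.mul_le_mul_right _ hkpos
          omega
      refine Ideal.subset_span ⟨_, ⟨m'.sum, ⟨hcond, by omega⟩, rfl⟩, ?_⟩
      exact (mono_eq_monomial _ _).symm.trans hz2.symm
  have hw2 := hbound hw1
  have hsupp : D (j * (a / Nat.gcd a b)) ((j * Nat.gcd a b - j) * (b / Nat.gcd a b))
      ∈ (P K a b (Multiset.replicate j 1)).support := by
    classical
    rw [hweq, mono_eq_monomial, support_monomial]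
    simp
  obtain ⟨si, hsi, hle⟩ := mem_ideal_span_monomial_image.mp hw2 _ hsupp
  obtain ⟨t, ⟨htj, htg⟩, rfl⟩ := hsi
  have h0 := Finsupp.le_def.mp hle 0
  have h1 := Finsupp.le_def.mp hle 1
  rw [D_apply0, D_apply0] at h0
  rw [D_apply1, D_apply1] at h1
  have ht : t ≤ j := Nat.le_of_mul_le_mul_right h0 hp
  have ht2 : j * Nat.gcd a b - t ≤ j * Nat.gcd a b - j := Nat.le_of_mul_le_mul_right h1 hq
  have hjgj : j ≤ j * Nat.gcd a b := Nat.le_mul_of_pos_right j (by omega)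
  omega

end Main

end Stmt3Aux

theorem stmt3 (K : Type*) [Field K] (a b : ℕ) (ha : 0 < a) (hb : 0 < b)
    (hg : 2 ≤ Nat.gcd a b) (j : ℕ) (hj1 : 1 ≤ j) (hj2 : j ≤ Nat.gcd a b - 1) :
    IA K a b (({0, 1} : Finset ℕ) ∪ Finset.Icc (j + 1) (Nat.gcd a b)) ^ (j + 1)
        = Jab K a b *
          IA K a b (({0, 1} : Finset ℕ) ∪ Finset.Icc (j + 1) (Nat.gcd a b)) ^ j
      ∧ IA K a b (({0, 1} : Finset ℕ) ∪ Finset.Icc (j + 1) (Nat.gcd a b)) ^ j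
        ≠ Jab K a b *
          IA K a b (({0, 1} : Finset ℕ) ∪ Finset.Icc (j + 1) (Nat.gcd a b)) ^ (j - 1) := by
  exact ⟨Stmt3Aux.part1 a b ha hb hg j hj1 hj2, Stmt3Aux.part2 a b ha hb hg j hj1 hj2⟩
end

section
/- Let K be a field, a, b positive integers with g = gcd(a,b) > 1, let A be a set with {0,g} ⊆ A ⊆ {0,1,…,g}, let d = gcd(A), and set I = I_A, J = (x^a, y^b). Then I ≠ J and I² = J·I (i.e. the reduction number of I equals 1) if and only if d ≠ g and A = {i : 0 ≤ i ≤ g and d divides i}. -/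
open MvPolynomial Pointwise

/-! ### Auxiliary lemmas -/

lemma comb_main (g : ℕ) (hg : 1 < g) (A : Finset ℕ) (h0 : 0 ∈ A) (hgA : g ∈ A)
    (hAle : ∀ i ∈ A, i ≤ g) :
    (∀ i ∈ A, ∀ j ∈ A, ∃ k ∈ A, i + j = k ∨ i + j = k + g) ↔
      A = (Finset.range (g + 1)).filter (fun i => A.gcd id ∣ i) := by
  set d := A.gcd id with hd
  have hdg : d ∣ g := Finset.gcd_dvd hgA
  constructor
  · intro P
    haveI : NeZero g := ⟨by omega⟩
    set S : Set (ZMod g) := (fun n : ℕ => (n : ZMod g)) '' (A : Set ℕ) with hS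
    have h0S : (0 : ZMod g) ∈ S := ⟨0, by simpa using h0⟩
    have haddS : ∀ x ∈ S, ∀ y ∈ S, x + y ∈ S := by
      rintro x ⟨i, hi, rfl⟩ y ⟨j, hj, rfl⟩
      obtain ⟨k, hk, hcase⟩ := P i hi j hj
      refine ⟨k, hk, ?_⟩
      rcases hcase with h | h
      · rw [← Nat.cast_add, h]
      · rw [← Nat.cast_add, h]; push_cast [ZMod.natCast_self]; ring
    have hnsmul : ∀ (n : ℕ), ∀ x ∈ S, n • x ∈ S := by
      intro n
      induction n with
      | zero => intro x _; simpa using h0S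
      | succ m ih => intro x hx; rw [succ_nsmul]; exact haddS _ (ih x hx) _ hx
    have hmulc : ∀ (c : ZMod g), ∀ x ∈ S, c * x ∈ S := by
      intro c x hx
      obtain ⟨n, rfl⟩ := ZMod.natCast_zmod_surjective c
      rw [← nsmul_eq_mul]
      exact hnsmul n x hx
    have hgcd : ∀ B : Finset ℕ, (∀ i ∈ B, ((i : ZMod g) ∈ S)) →
        (((B.gcd id : ℕ) : ZMod g) ∈ S) := by
      intro B
      induction B using Finset.induction with
      | empty => intro _; simpa using h0S
      | insert c B' ha ih =>
        intro hmem
        rw [Finset.gcd_insert]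
        show ((Nat.gcd (id c) (B'.gcd id) : ℕ) : ZMod g) ∈ S
        have hc : ((c : ZMod g) ∈ S) := hmem c (Finset.mem_insert_self _ _)
        have hB : (((B'.gcd id : ℕ) : ZMod g) ∈ S) :=
          ih (fun i hi => hmem i (Finset.mem_insert_of_mem hi))
        set m := B'.gcd id
        have hbez : ((Nat.gcd (id c) m : ℤ) : ZMod g)
            = ((c : ℤ) * Int.gcdA c m + (m : ℤ) * Int.gcdB c m : ℤ) := by
          rw_mod_cast [← Int.gcd_eq_gcd_ab (c : ℤ) (m : ℤ)]
          simp [Int.gcd_natCast_natCast]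
        have : ((Nat.gcd (id c) m : ZMod g))
            = ((Int.gcdA c m : ZMod g)) * (c : ZMod g)
              + ((Int.gcdB c m : ZMod g)) * (m : ZMod g) := by
          push_cast at hbez ⊢
          rw [hbez]; ring
        rw [this]
        exact haddS _ (hmulc _ _ hc) _ (hmulc _ _ hB)
    have hdS : ((d : ZMod g) ∈ S) := by
      apply hgcd
      intro i hi
      exact ⟨i, hi, rfl⟩
    ext i
    simp only [Finset.mem_filter, Finset.mem_range]
    constructor
    · intro hi
      exact ⟨by have := hAle i hi; omega, Finset.gcd_dvd hi⟩
    · rintro ⟨hilt, hdvd⟩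
      have hile : i ≤ g := by omega
      rcases eq_or_ne i g with rfl | hig
      · exact hgA
      have hiltg : i < g := lt_of_le_of_ne hile hig
      obtain ⟨c, rfl⟩ := hdvd
      have : ((d * c : ℕ) : ZMod g) ∈ S := by
        rw [Nat.cast_mul, mul_comm, ← nsmul_eq_mul]
        exact hnsmul c _ hdS
      obtain ⟨k, hk, hkk⟩ := this
      have hmod : k % g = (d * c) % g := (ZMod.natCast_eq_natCast_iff k (d * c) g).mp hkk
      have hkle : k ≤ g := hAle k hk
      have hdc : (d * c) % g = d * c := Nat.mod_eq_of_lt hiltg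
      rcases eq_or_ne k g with rfl | hkg
      · have : d * c = 0 := by rw [← hdc, ← hmod, Nat.mod_self]
        rw [this]; exact h0
      · have : k = d * c := by
          rw [← hdc, ← hmod, Nat.mod_eq_of_lt (lt_of_le_of_ne hkle hkg)]
        rwa [← this]
  · intro hfilt i hi j hj
    have hdi : d ∣ i := Finset.gcd_dvd hi
    have hdj : d ∣ j := Finset.gcd_dvd hj
    have hile : i ≤ g := hAle i hi
    have hjle : j ≤ g := hAle j hj
    rcases le_or_gt (i + j) g with hle | hlt
    · refine ⟨i + j, ?_, Or.inl rfl⟩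
      rw [hfilt]
      exact Finset.mem_filter.mpr ⟨Finset.mem_range.mpr (by omega), dvd_add hdi hdj⟩
    · refine ⟨i + j - g, ?_, Or.inr (by omega)⟩
      rw [hfilt]
      exact Finset.mem_filter.mpr ⟨Finset.mem_range.mpr (by omega),
        Nat.dvd_sub (dvd_add hdi hdj) hdg⟩

/-- exponent vector `(s·al, c − s·be)` -/
noncomputable def expv (al be c : ℕ) (s : ℕ) : Fin 2 →₀ ℕ :=
  Finsupp.single 0 (s * al) + Finsupp.single 1 (c - s * be)

lemma mono_eq_monomial (K : Type*) [Field K] (c d : ℕ) :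
    mono K c d = monomial (Finsupp.single 0 c + Finsupp.single 1 d) (1 : K) := by
  rw [mono, X_pow_eq_monomial, X_pow_eq_monomial, monomial_mul, one_mul]

lemma mem_span_monomial (K : Type*) [Field K] (F : ℕ → (Fin 2 →₀ ℕ)) (S : Set ℕ)
    (e : Fin 2 →₀ ℕ) :
    monomial e (1 : K) ∈ Ideal.span ((fun s => monomial (F s) (1 : K)) '' S)
      ↔ ∃ s ∈ S, F s ≤ e := by
  have h : ((fun s => monomial (F s) (1 : K)) '' S)
      = ((fun e => monomial e (1 : K)) '' (F '' S)) := by rw [Set.image_image]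
  rw [h, mem_ideal_span_monomial_image]
  simp [support_monomial]

lemma expv_apply0 (al be c s : ℕ) : expv al be c s 0 = s * al := by
  simp [expv, Finsupp.single_apply]

lemma expv_apply1 (al be c s : ℕ) : expv al be c s 1 = c - s * be := by
  simp [expv, Finsupp.single_apply]

lemma rigid {al be c : ℕ} (hal : 0 < al) (hbe : 0 < be) {s t : ℕ}
    (hs : s * be ≤ c) (ht : t * be ≤ c) (h : expv al be c t ≤ expv al be c s) : t = s := by
  have h0 := Finsupp.le_def.mp h 0
  have h1 := Finsupp.le_def.mp h 1
  rw [expv_apply0, expv_apply0] at h0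
  rw [expv_apply1, expv_apply1] at h1
  have hts : t ≤ s := Nat.le_of_mul_le_mul_right h0 hal
  have hsbe : s * be ≤ t * be := by omega
  have hst : s ≤ t := Nat.le_of_mul_le_mul_right hsbe hbe
  omega

lemma expv_add {al be b i j : ℕ} (hi : i * be ≤ b) (hj : j * be ≤ b) :
    expv al be b i + expv al be b j = expv al be (b + b) (i + j) := by
  unfold expv
  have h1 : (i + j) * al = i * al + j * al := add_mul i j al
  have h2 : (b + b) - (i + j) * be = (b - i * be) + (b - j * be) := by
    rw [add_mul]; omega
  rw [h1, h2, Finsupp.single_add, Finsupp.single_add]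
  abel

lemma span_mul_span_expv (K : Type*) [Field K] (al be b : ℕ) (S T : Set ℕ)
    (hS : ∀ i ∈ S, i * be ≤ b) (hT : ∀ j ∈ T, j * be ≤ b) :
    Ideal.span ((fun i => monomial (expv al be b i) (1 : K)) '' S) *
      Ideal.span ((fun j => monomial (expv al be b j) (1 : K)) '' T)
    = Ideal.span ((fun s => monomial (expv al be (b + b) s) (1 : K)) '' (S + T)) := by
  rw [Ideal.span_mul_span']
  congr 1
  ext p
  constructor
  · rintro ⟨-, ⟨i, hi, rfl⟩, -, ⟨j, hj, rfl⟩, rfl⟩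
    exact ⟨i + j, Set.add_mem_add hi hj, by
      simp only [monomial_mul, one_mul, expv_add (hS i hi) (hT j hj)]⟩
  · rintro ⟨s, ⟨i, hi, j, hj, rfl⟩, rfl⟩
    exact ⟨_, ⟨i, hi, rfl⟩, _, ⟨j, hj, rfl⟩, by
      simp only [monomial_mul, one_mul, expv_add (hS i hi) (hT j hj)]⟩

lemma IA_eq (K : Type*) [Field K] (a b : ℕ) (A : Finset ℕ) :
    IA K a b A = Ideal.span
      ((fun i => monomial (expv (a / Nat.gcd a b) (b / Nat.gcd a b) b i) (1 : K))
        '' (A : Set ℕ)) := by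
  unfold IA
  apply congrArg
  apply Set.image_congr'
  intro i
  rw [mono_eq_monomial]
  rfl

lemma Jab_eq (K : Type*) [Field K] (a b : ℕ) :
    Jab K a b = Ideal.span
      ((fun i => monomial (expv (a / Nat.gcd a b) (b / Nat.gcd a b) b i) (1 : K))
        '' ({Nat.gcd a b, 0} : Set ℕ)) := by
  have hga : Nat.gcd a b * (a / Nat.gcd a b) = a := Nat.mul_div_cancel' (Nat.gcd_dvd_left a b)
  have hgb : Nat.gcd a b * (b / Nat.gcd a b) = b := Nat.mul_div_cancel' (Nat.gcd_dvd_right a b)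
  have h1 : expv (a / Nat.gcd a b) (b / Nat.gcd a b) b (Nat.gcd a b)
      = Finsupp.single 0 a + Finsupp.single 1 0 := by
    unfold expv
    rw [hga, hgb, Nat.sub_self]
  have h0 : expv (a / Nat.gcd a b) (b / Nat.gcd a b) b 0
      = Finsupp.single 0 0 + Finsupp.single 1 b := by
    unfold expv
    rw [zero_mul, zero_mul, Nat.sub_zero]
  rw [Jab]
  apply congrArg
  rw [Set.image_pair]
  simp only [h1, h0]
  rw [mono_eq_monomial K a 0, mono_eq_monomial K 0 b]

theorem stmt4 (K : Type*) [Field K] (a b : ℕ) (ha : 0 < a) (hb : 0 < b)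
    (hg : 1 < Nat.gcd a b) (A : Finset ℕ)
    (hA1 : ({0, Nat.gcd a b} : Finset ℕ) ⊆ A)
    (hA2 : A ⊆ Finset.range (Nat.gcd a b + 1)) :
    (IA K a b A ≠ Jab K a b ∧ IA K a b A ^ 2 = Jab K a b * IA K a b A)
      ↔ (A.gcd id ≠ Nat.gcd a b ∧
          A = (Finset.range (Nat.gcd a b + 1)).filter (fun i => A.gcd id ∣ i)) := by
  set g := Nat.gcd a b with hgdef
  set al := a / g with haldef
  set be := b / g with hbedef
  have hgpos : 0 < g := by omega
  have hal : 0 < al := Nat.div_pos (Nat.le_of_dvd ha (Nat.gcd_dvd_left a b)) hgpos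
  have hbe : 0 < be := Nat.div_pos (Nat.le_of_dvd hb (Nat.gcd_dvd_right a b)) hgpos
  have hgb : g * be = b := Nat.mul_div_cancel' (Nat.gcd_dvd_right a b)
  have h0A : 0 ∈ A := hA1 (by simp)
  have hgA : g ∈ A := hA1 (by simp)
  have hAle : ∀ i ∈ A, i ≤ g := by
    intro i hi
    have := Finset.mem_range.mp (hA2 hi); omega
  have hboundA : ∀ i ∈ (A : Set ℕ), i * be ≤ b := by
    intro i hi
    calc i * be ≤ g * be := Nat.mul_le_mul_right be (hAle i hi)
    _ = b := hgb
  have hboundJ : ∀ i ∈ ({g, 0} : Set ℕ), i * be ≤ b := by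
    rintro i (rfl | rfl)
    · rw [hgb]
    · simp
  have hbound2 : ∀ (S T : Set ℕ), (∀ i ∈ S, i * be ≤ b) → (∀ j ∈ T, j * be ≤ b) →
      ∀ s ∈ S + T, s * be ≤ b + b := by
    rintro S T hS hT s ⟨i, hi, j, hj, rfl⟩
    rw [add_mul]
    exact add_le_add (hS i hi) (hT j hj)
  have hIA := IA_eq K a b A
  have hJ := Jab_eq K a b
  rw [← hgdef, ← haldef, ← hbedef] at hIA hJ
  have hI2 : IA K a b A ^ 2
      = Ideal.span ((fun s => monomial (expv al be (b + b) s) (1 : K))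
          '' ((A : Set ℕ) + (A : Set ℕ))) := by
    rw [sq, hIA, span_mul_span_expv K al be b _ _ hboundA hboundA]
  have hJI : Jab K a b * IA K a b A
      = Ideal.span ((fun s => monomial (expv al be (b + b) s) (1 : K))
          '' (({g, 0} : Set ℕ) + (A : Set ℕ))) := by
    rw [hJ, hIA, span_mul_span_expv K al be b _ _ hboundJ hboundA]
  -- Equivalence for the squared ideal condition
  have hsubJ : ({g, 0} : Set ℕ) ⊆ (A : Set ℕ) := by
    rintro i (rfl | rfl)
    · exact hgA
    · exact h0A
  have e2 : (IA K a b A ^ 2 = Jab K a b * IA K a b A)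
      ↔ ((A : Set ℕ) + (A : Set ℕ) ⊆ ({g, 0} : Set ℕ) + (A : Set ℕ)) := by
    rw [hI2, hJI]
    constructor
    · intro heq s hs
      have hm : monomial (expv al be (b + b) s) (1 : K)
          ∈ Ideal.span ((fun s => monomial (expv al be (b + b) s) (1 : K))
              '' (({g, 0} : Set ℕ) + (A : Set ℕ))) := by
        rw [← heq]
        exact Ideal.subset_span ⟨s, hs, rfl⟩
      obtain ⟨t, ht, hle⟩ := (mem_span_monomial K _ _ _).mp hm
      have hsb : s * be ≤ b + b := hbound2 _ _ hboundA hboundA s hs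
      have htb : t * be ≤ b + b := hbound2 _ _ hboundJ hboundA t ht
      rwa [rigid hal hbe hsb htb hle] at ht
    · intro hsub2
      rw [Set.Subset.antisymm hsub2 (Set.add_subset_add_right hsubJ)]
  -- Equivalence for I = J
  have e1 : (IA K a b A = Jab K a b) ↔ A = ({0, g} : Finset ℕ) := by
    constructor
    · intro heq
      refine Finset.Subset.antisymm ?_ hA1
      intro i hi
      have hm : monomial (expv al be b i) (1 : K)
          ∈ Ideal.span ((fun i => monomial (expv al be b i) (1 : K))
              '' ({g, 0} : Set ℕ)) := by
        rw [← hJ, ← heq, hIA]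
        exact Ideal.subset_span ⟨i, hi, rfl⟩
      obtain ⟨t, ht, hle⟩ := (mem_span_monomial K _ _ _).mp hm
      have hib : i * be ≤ b := hboundA i hi
      have htb : t * be ≤ b := hboundJ t ht
      rw [rigid hal hbe hib htb hle] at ht
      rcases ht with rfl | rfl
      · simp
      · simp
    · intro hAeq
      rw [hIA, hJ]
      apply congrArg
      apply congrArg
      rw [hAeq]
      simp [Set.pair_comm]
  have e1' : A.gcd id = g ↔ A = ({0, g} : Finset ℕ) := by
    constructor
    · intro hd
      ext i
      simp only [Finset.mem_insert, Finset.mem_singleton]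
      constructor
      · intro hi
        have h1 : g ∣ i := hd ▸ Finset.gcd_dvd hi
        have h2 := hAle i hi
        rcases Nat.eq_zero_or_pos i with rfl | hipos
        · exact Or.inl rfl
        · exact Or.inr (le_antisymm h2 (Nat.le_of_dvd hipos h1))
      · rintro (rfl | rfl)
        · exact h0A
        · exact hgA
    · intro h
      rw [h]
      simp [Finset.gcd_insert, Finset.gcd_singleton]
  -- bridge to the combinatorial statement
  have e3 : ((A : Set ℕ) + (A : Set ℕ) ⊆ ({g, 0} : Set ℕ) + (A : Set ℕ))
      ↔ (∀ i ∈ A, ∀ j ∈ A, ∃ k ∈ A, i + j = k ∨ i + j = k + g) := by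
    constructor
    · intro h i hi j hj
      have hmem : (i + j : ℕ) ∈ ({g, 0} : Set ℕ) + (A : Set ℕ) :=
        h (Set.add_mem_add (Finset.mem_coe.mpr hi) (Finset.mem_coe.mpr hj))
      obtain ⟨t, ht, k, hk, hsum⟩ := hmem
      have hsum2 : t + k = i + j := hsum
      rcases ht with rfl | rfl
      · exact ⟨k, Finset.mem_coe.mp hk, Or.inr (by omega)⟩
      · exact ⟨k, Finset.mem_coe.mp hk, Or.inl (by omega)⟩
    · rintro P s ⟨i, hi, j, hj, rfl⟩
      obtain ⟨k, hk, hc⟩ := P i (Finset.mem_coe.mp hi) j (Finset.mem_coe.mp hj)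
      rcases hc with hc | hc
      · have h0m : (0 : ℕ) ∈ ({g, 0} : Set ℕ) := by simp
        have := Set.add_mem_add h0m (Finset.mem_coe.mpr hk)
        rwa [zero_add, ← hc] at this
      · have hgm : (g : ℕ) ∈ ({g, 0} : Set ℕ) := by simp
        have := Set.add_mem_add hgm (Finset.mem_coe.mpr hk)
        rwa [add_comm g k, ← hc] at this
  have ecomb := comb_main g hg A h0A hgA hAle
  constructor
  · rintro ⟨hne, hsq⟩
    exact ⟨fun h => hne (e1.mpr (e1'.mp h)), ecomb.mp (e3.mp (e2.mp hsq))⟩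
  · rintro ⟨hd, hfilt⟩
    exact ⟨fun h => hd (e1'.mpr (e1.mp h)), e2.mpr (e3.mpr (ecomb.mpr hfilt))⟩
end

section
/- Let K be a field, a, b positive integers with g = gcd(a,b), let e be an integer with 1 ≤ e ≤ g − 1, and let I = (x^a, x^{e·(a/g)} y^{b − e·(b/g)}, y^b) ⊆ K[x,y] and J = (x^a, y^b). Set m = g/gcd(e,g) − 1 (note m ≥ 1). Then I^{m+1} = J·I^m and I^m ≠ J·I^{m−1}; that is, the reduction number of I with respect to J equals g/gcd(e,g) − 1. -/
open MvPolynomial Pointwise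

namespace Stmt5Aux

/-- exponent vector of `x^c y^d` -/
noncomputable def exv (c d : ℕ) : Fin 2 →₀ ℕ := Finsupp.single 0 c + Finsupp.single 1 d

lemma exv_apply0 (c d : ℕ) : exv c d 0 = c := by
  simp [exv, Finsupp.single_apply]

lemma exv_apply1 (c d : ℕ) : exv c d 1 = d := by
  simp [exv, Finsupp.single_apply]

lemma exv_add (c d c' d' : ℕ) : exv c d + exv c' d' = exv (c + c') (d + d') := by
  simp only [exv, Finsupp.single_add]
  abel

lemma exv_smul (n c d : ℕ) : n • exv c d = exv (n * c) (n * d) := by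
  simp [exv, Finsupp.smul_single, smul_eq_mul]

lemma mono_eq {K : Type*} [Field K] (c d : ℕ) :
    mono K c d = monomial (exv c d) (1 : K) := by
  rw [mono, exv, X_pow_eq_monomial, X_pow_eq_monomial, monomial_mul, one_mul]

lemma span_image_mul {K : Type*} [Field K] (s t : Set (Fin 2 →₀ ℕ)) :
    Ideal.span ((fun s => monomial s (1 : K)) '' s) *
      Ideal.span ((fun s => monomial s (1 : K)) '' t)
      = Ideal.span ((fun s => monomial s (1 : K)) '' (s + t)) := by
  rw [Ideal.span_mul_span']
  congr 1
  ext p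
  constructor
  · rintro ⟨_, ⟨x, hx, rfl⟩, _, ⟨y, hy, rfl⟩, rfl⟩
    exact ⟨x + y, Set.add_mem_add hx hy, by simp [monomial_mul]⟩
  · rintro ⟨_, ⟨x, hx, y, hy, rfl⟩, rfl⟩
    exact ⟨_, ⟨x, hx, rfl⟩, _, ⟨y, hy, rfl⟩, by simp [monomial_mul]⟩

/-- exponent sets of `I^n` -/
def T3 (α β γ : Fin 2 →₀ ℕ) (n : ℕ) : Set (Fin 2 →₀ ℕ) :=
  {x | ∃ i j k, i + j + k = n ∧ x = i • α + j • β + k • γ}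

lemma T3_succ (α β γ : Fin 2 →₀ ℕ) (n : ℕ) :
    T3 α β γ (n + 1) = ({α, β, γ} : Set _) + T3 α β γ n := by
  ext x
  simp only [T3, Set.mem_setOf_eq, Set.mem_add, Set.mem_insert_iff,
    Set.mem_singleton_iff]
  constructor
  · rintro ⟨i, j, k, hn, rfl⟩
    rcases i with _ | i
    · rcases j with _ | j
      · rcases k with _ | k
        · omega
        · exact ⟨γ, Or.inr (Or.inr rfl), 0 • α + 0 • β + k • γ,
            ⟨0, 0, k, by omega, rfl⟩, by rw [succ_nsmul]; abel⟩
      · exact ⟨β, Or.inr (Or.inl rfl), 0 • α + j • β + k • γ,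
          ⟨0, j, k, by omega, rfl⟩, by rw [succ_nsmul]; abel⟩
    · exact ⟨α, Or.inl rfl, i • α + j • β + k • γ,
        ⟨i, j, k, by omega, rfl⟩, by rw [succ_nsmul]; abel⟩
  · rintro ⟨y, hy, z, ⟨i, j, k, hn, rfl⟩, rfl⟩
    rcases hy with rfl | rfl | rfl
    · exact ⟨i + 1, j, k, by omega, by rw [succ_nsmul]; abel⟩
    · exact ⟨i, j + 1, k, by omega, by rw [succ_nsmul]; abel⟩
    · exact ⟨i, j, k + 1, by omega, by rw [succ_nsmul]; abel⟩

lemma span_T3_pow {K : Type*} [Field K] (α β γ : Fin 2 →₀ ℕ) (n : ℕ) :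
    Ideal.span ((fun s => monomial s (1 : K)) '' ({α, β, γ} : Set _)) ^ n
      = Ideal.span ((fun s => monomial s (1 : K)) '' T3 α β γ n) := by
  induction n with
  | zero =>
    have h0 : T3 α β γ 0 = {0} := by
      ext x
      simp only [T3, Set.mem_setOf_eq, Set.mem_singleton_iff]
      constructor
      · rintro ⟨i, j, k, hn, rfl⟩
        obtain ⟨rfl, rfl, rfl⟩ : i = 0 ∧ j = 0 ∧ k = 0 := by omega
        simp
      · rintro rfl
        exact ⟨0, 0, 0, rfl, by simp⟩
    rw [pow_zero, h0, Set.image_singleton]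
    simp [Ideal.one_eq_top, Ideal.span_singleton_one, monomial_zero']
  | succ n ih =>
    rw [pow_succ, ih, mul_comm, span_image_mul, ← T3_succ]

lemma arith_contra (g d e F g₁ e₁ m p q j : ℕ) (hdpos : 0 < d)
    (hgd : g = d * g₁) (hed : e = d * e₁) (hF : e + F = g)
    (hcop : Nat.Coprime e₁ g₁) (hm1 : m + 1 = g₁)
    (hsum : p + j + q = m) (hpq : 1 ≤ p + q)
    (hx : p * g + j * e ≤ m * e) (hy : j * F + q * g ≤ m * F) : False := by
  have hsum2 : (p * g + j * e) + (j * F + q * g) = m * e + m * F := by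
    calc (p * g + j * e) + (j * F + q * g) = (p + q) * g + j * (e + F) := by ring
      _ = (p + q) * g + j * g := by rw [hF]
      _ = (p + q + j) * g := by ring
      _ = m * g := by rw [show p + q + j = m from by omega]
      _ = m * (e + F) := by rw [hF]
      _ = m * e + m * F := by ring
  have hme : m * e = (p + q) * e + j * e := by
    rw [show m = p + q + j from by omega]; ring
  have heq1 : p * g = (p + q) * e := by linarith
  have heq2 : p * g₁ = (p + q) * e₁ := by
    apply Nat.eq_of_mul_eq_mul_left hdpos
    calc d * (p * g₁) = p * (d * g₁) := by ring
      _ = p * g := by rw [← hgd]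
      _ = (p + q) * e := heq1
      _ = d * ((p + q) * e₁) := by rw [hed]; ring
  have hdvd : g₁ ∣ p + q := hcop.symm.dvd_of_dvd_mul_right ⟨p, by rw [← heq2]; ring⟩
  have := Nat.le_of_dvd (by omega) hdvd
  omega

end Stmt5Aux

open Stmt5Aux

set_option maxHeartbeats 2000000 in
theorem stmt5 (K : Type*) [Field K] (a b : ℕ) (ha : 0 < a) (hb : 0 < b)
    (e : ℕ) (he1 : 1 ≤ e) (he2 : e ≤ Nat.gcd a b - 1) :
    Ideal.span {mono K a 0,
        mono K (e * (a / Nat.gcd a b)) (b - e * (b / Nat.gcd a b)), mono K 0 b}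
        ^ (Nat.gcd a b / Nat.gcd e (Nat.gcd a b) - 1 + 1)
      = Jab K a b *
        Ideal.span {mono K a 0,
          mono K (e * (a / Nat.gcd a b)) (b - e * (b / Nat.gcd a b)), mono K 0 b}
          ^ (Nat.gcd a b / Nat.gcd e (Nat.gcd a b) - 1)
    ∧ Ideal.span {mono K a 0,
        mono K (e * (a / Nat.gcd a b)) (b - e * (b / Nat.gcd a b)), mono K 0 b}
        ^ (Nat.gcd a b / Nat.gcd e (Nat.gcd a b) - 1)
      ≠ Jab K a b *
        Ideal.span {mono K a 0,
          mono K (e * (a / Nat.gcd a b)) (b - e * (b / Nat.gcd a b)), mono K 0 b}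
          ^ (Nat.gcd a b / Nat.gcd e (Nat.gcd a b) - 1 - 1) := by
  classical
  set g := Nat.gcd a b with hgdef
  set d := Nat.gcd e g with hddef
  set A := a / g with hAdef
  set B := b / g with hBdef
  set m := g / d - 1 with hmdef
  -- basic facts
  have hgpos : 0 < g := Nat.gcd_pos_of_pos_left b ha
  have hdpos : 0 < d := Nat.gcd_pos_of_pos_left g he1
  have hga : g ∣ a := Nat.gcd_dvd_left a b
  have hgb : g ∣ b := Nat.gcd_dvd_right a b
  have hde : d ∣ e := Nat.gcd_dvd_left e g
  have hdg : d ∣ g := Nat.gcd_dvd_right e g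
  have haA : a = g * A := (Nat.mul_div_cancel' hga).symm
  have hbB : b = g * B := (Nat.mul_div_cancel' hgb).symm
  have hApos : 0 < A := Nat.div_pos (Nat.le_of_dvd ha hga) hgpos
  have hBpos : 0 < B := Nat.div_pos (Nat.le_of_dvd hb hgb) hgpos
  have heg : e < g := by omega
  set F := g - e with hFdef
  have hF : e + F = g := by omega
  have hdF : d ∣ F := Nat.dvd_sub hdg hde
  have hdle : d ≤ e := Nat.le_of_dvd he1 hde
  have hdltg : d < g := lt_of_le_of_lt hdle heg
  obtain ⟨g₁, hgd⟩ := hdg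
  obtain ⟨e₁, hed⟩ := hde
  obtain ⟨f₁, hFd⟩ := hdF
  have hg1 : g / d = g₁ := by rw [hgd]; exact Nat.mul_div_cancel_left _ hdpos
  have hg1two : 2 ≤ g₁ := by
    rcases g₁ with _ | _ | n
    · omega
    · omega
    · omega
  have he1pos : 1 ≤ e₁ := by
    rcases e₁ with _ | n
    · omega
    · omega
  have hef1 : e₁ + f₁ = g₁ := by
    apply Nat.eq_of_mul_eq_mul_left hdpos
    have h : d * e₁ + d * f₁ = d * g₁ := by rw [← hed, ← hFd, ← hgd]; omega
    calc d * (e₁ + f₁) = d * e₁ + d * f₁ := by ring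
      _ = d * g₁ := h
  have hm1 : m + 1 = g₁ := by
    have : m = g₁ - 1 := by rw [hmdef, hg1]
    omega
  have hmpos : 1 ≤ m := by omega
  have hFB : b - e * B = F * B := by rw [hbB, hFdef, Nat.sub_mul]
  have hcop : Nat.Coprime e₁ g₁ := by
    have h := Nat.coprime_div_gcd_div_gcd (m := e) (n := g) (by rw [← hddef]; exact hdpos)
    rw [← hddef] at h
    rwa [show e / d = e₁ from by rw [hed]; exact Nat.mul_div_cancel_left _ hdpos, hg1] at h
  -- rewrite the goal into monomial-image form
  simp only [Jab]
  rw [mono_eq (K := K) a 0, mono_eq (K := K) (e * A) (b - e * B), mono_eq (K := K) 0 b]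
  set α := exv a 0 with hα
  set β := exv (e * A) (b - e * B) with hβ
  set γ := exv 0 b with hγ
  have hkey : (m + 1) • β = e₁ • α + f₁ • γ := by
    rw [hβ, hα, hγ, exv_smul, exv_smul, exv_smul, exv_add]
    have h1 : (m + 1) * (e * A) = e₁ * a + f₁ * 0 := by
      rw [hm1, hed, haA, hgd]; ring
    have h2 : (m + 1) * (b - e * B) = e₁ * 0 + f₁ * b := by
      rw [hm1, hFB, hFd, hbB, hgd]; ring
    rw [h1, h2]
  have himg3 : ((fun s => monomial s (1 : K)) '' ({α, β, γ} : Set _))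
      = {monomial α 1, monomial β 1, monomial γ 1} := by
    simp [Set.image_insert_eq]
  have himg2 : ((fun s => monomial s (1 : K)) '' ({α, γ} : Set _))
      = {monomial α 1, monomial γ 1} := by
    simp [Set.image_insert_eq]
  rw [← himg3, ← himg2, span_T3_pow, span_T3_pow, span_T3_pow,
    span_image_mul, span_image_mul]
  constructor
  · -- the equality
    have hsets : ({α, γ} : Set _) + T3 α β γ m = T3 α β γ (m + 1) := by
      ext x
      simp only [Set.mem_add, Set.mem_insert_iff, Set.mem_singleton_iff, T3,
        Set.mem_setOf_eq]
      constructor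
      · rintro ⟨y, hy, z, ⟨i, j, k, hn, rfl⟩, rfl⟩
        rcases hy with rfl | rfl
        · exact ⟨i + 1, j, k, by omega, by rw [succ_nsmul]; abel⟩
        · exact ⟨i, j, k + 1, by omega, by rw [succ_nsmul]; abel⟩
      · rintro ⟨i, j, k, hn, rfl⟩
        rcases i with _ | i
        · rcases k with _ | k
          · have hj : j = m + 1 := by omega
            subst hj
            obtain ⟨e₂, he₂⟩ : ∃ e₂, e₁ = e₂ + 1 := ⟨e₁ - 1, by omega⟩
            refine ⟨α, Or.inl rfl, e₂ • α + 0 • β + f₁ • γ,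
              ⟨e₂, 0, f₁, by omega, rfl⟩, ?_⟩
            rw [hkey, he₂, succ_nsmul]
            simp only [zero_smul, add_zero, zero_add]
            abel
          · exact ⟨γ, Or.inr rfl, 0 • α + j • β + k • γ,
              ⟨0, j, k, by omega, rfl⟩, by rw [succ_nsmul]; abel⟩
        · exact ⟨α, Or.inl rfl, i • α + j • β + k • γ,
            ⟨i, j, k, by omega, rfl⟩, by rw [succ_nsmul]; abel⟩
    rw [hsets]
  · -- the inequality
    intro hEq
    have hmem : monomial (m • β) (1 : K) ∈
        Ideal.span ((fun s => monomial s (1 : K)) ''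
          (({α, γ} : Set _) + T3 α β γ (m - 1))) := by
      rw [← hEq]
      exact Ideal.subset_span ⟨m • β, ⟨0, m, 0, by omega, by simp⟩, rfl⟩
    rw [mem_ideal_span_monomial_image] at hmem
    have hsupp : m • β ∈ (monomial (m • β) (1 : K)).support := by
      simp [support_monomial]
    obtain ⟨s, hs, hle⟩ := hmem _ hsupp
    obtain ⟨y, hy, z, ⟨i, j, k, hn, rfl⟩, rfl⟩ := hs
    simp only [Set.mem_insert_iff, Set.mem_singleton_iff] at hy
    have h0 := Finsupp.le_def.mp hle 0
    have h1 := Finsupp.le_def.mp hle 1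
    rw [hα, hβ, hγ] at h0 h1
    simp only [Finsupp.add_apply, Finsupp.smul_apply, smul_eq_mul, exv_apply0] at h0
    simp only [Finsupp.add_apply, Finsupp.smul_apply, smul_eq_mul, exv_apply1] at h1
    rcases hy with rfl | rfl
    · rw [hα] at h0 h1
      simp only [Finsupp.add_apply, exv_apply0, exv_apply1] at h0 h1
      rw [haA] at h0
      rw [hFB, hbB] at h1
      have hx : ((i + 1) * g + j * e) * A ≤ (m * e) * A := by nlinarith [h0]
      have hy' : (j * F + k * g) * B ≤ (m * F) * B := by nlinarith [h1]
      exact arith_contra g d e F g₁ e₁ m (i + 1) k j hdpos hgd hed hF hcop hm1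
        (by omega) (by omega)
        (Nat.le_of_mul_le_mul_right hx hApos)
        (Nat.le_of_mul_le_mul_right hy' hBpos)
    · rw [hγ] at h0 h1
      simp only [Finsupp.add_apply, exv_apply0, exv_apply1] at h0 h1
      rw [haA] at h0
      rw [hFB, hbB] at h1
      have hx : (i * g + j * e) * A ≤ (m * e) * A := by nlinarith [h0]
      have hy' : (j * F + (k + 1) * g) * B ≤ (m * F) * B := by nlinarith [h1]
      exact arith_contra g d e F g₁ e₁ m i (k + 1) j hdpos hgd hed hF hcop hm1
        (by omega) (by omega)
        (Nat.le_of_mul_le_mul_right hx hApos)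
        (Nat.le_of_mul_le_mul_right hy' hBpos)
end

section
/- Let K be a field, a, b positive integers with g = gcd(a,b), let A be a set with {0,g} ⊆ A ⊆ {0,1,…,g}, and set I = I_A, J = (x^a, y^b). Then the reduction number of I with respect to J equals g − 1 if and only if either g = 1 and I = (x^a, y^b), or there exists an integer e with 1 ≤ e ≤ g − 1 and gcd(e,g) = 1 such that A = {0, e, g}. -/
open MvPolynomial

/-- The reduction number of `I` with respect to `J = (x^a, y^b)`: the least `r ≥ 0`
with `I^(r+1) = J·I^r`. -/
noncomputable def redNum (K : Type*) [Field K] (a b : ℕ)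
    (I : Ideal (MvPolynomial (Fin 2) K)) : ℕ :=
  sInf {r : ℕ | I ^ (r + 1) = Jab K a b * I ^ r}

open Pointwise

namespace Stmt6Aux

noncomputable def mf (K : Type*) [Field K] : (Fin 2 →₀ ℕ) → MvPolynomial (Fin 2) K :=
  fun m => monomial m (1 : K)

noncomputable def vp (c d : ℕ) : Fin 2 →₀ ℕ := Finsupp.single 0 c + Finsupp.single 1 d

lemma mono_eq (K : Type*) [Field K] (c d : ℕ) : mono K c d = mf K (vp c d) := by
  simp [mono, mf, vp, X_pow_eq_monomial, monomial_mul]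

@[simp] lemma vp_apply0 (c d : ℕ) : vp c d 0 = c := by
  simp [vp, Finsupp.single_apply]

@[simp] lemma vp_apply1 (c d : ℕ) : vp c d 1 = d := by
  simp [vp, Finsupp.single_apply]

lemma vp_add (c d c' d' : ℕ) : vp c d + vp c' d' = vp (c + c') (d + d') := by
  simp [vp]; abel

@[simp] lemma vp_zero : vp 0 0 = 0 := by simp [vp]

lemma vp_le_iff {c d c' d' : ℕ} : vp c d ≤ vp c' d' ↔ c ≤ c' ∧ d ≤ d' := by
  constructor
  · intro h
    exact ⟨by simpa using h 0, by simpa using h 1⟩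
  · rintro ⟨h1, h2⟩ i
    fin_cases i <;> simpa

def sumE (E : Set (Fin 2 →₀ ℕ)) : ℕ → Set (Fin 2 →₀ ℕ)
  | 0 => {0}
  | n + 1 => E + sumE E n

variable {K : Type*} [Field K]

lemma span_mf_mul (E F : Set (Fin 2 →₀ ℕ)) :
    Ideal.span (mf K '' E) * Ideal.span (mf K '' F) = Ideal.span (mf K '' (E + F)) := by
  rw [Ideal.span_mul_span']
  congr 1
  ext x
  simp only [Set.mem_mul, Set.mem_image, Set.mem_add]
  constructor
  · rintro ⟨-, ⟨m, hm, rfl⟩, -, ⟨m', hm', rfl⟩, rfl⟩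
    exact ⟨m + m', ⟨m, hm, m', hm', rfl⟩, by simp [mf, monomial_mul]⟩
  · rintro ⟨-, ⟨m, hm, m', hm', rfl⟩, rfl⟩
    exact ⟨mf K m, ⟨m, hm, rfl⟩, mf K m', ⟨m', hm', rfl⟩, by simp [mf, monomial_mul]⟩

lemma span_mf_pow (E : Set (Fin 2 →₀ ℕ)) (n : ℕ) :
    Ideal.span (mf K '' E) ^ n = Ideal.span (mf K '' sumE E n) := by
  induction n with
  | zero =>
      simp only [pow_zero, sumE, Set.image_singleton]
      rw [show mf K 0 = 1 by simp [mf], Ideal.span_singleton_one, Ideal.one_eq_top]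
  | succ n ih =>
      rw [pow_succ', ih, span_mf_mul]
      rfl

lemma mem_span_mf {x : MvPolynomial (Fin 2) K} {E : Set (Fin 2 →₀ ℕ)} :
    x ∈ Ideal.span (mf K '' E) ↔ ∀ m ∈ x.support, ∃ m' ∈ E, m' ≤ m :=
  mem_ideal_span_monomial_image

lemma span_mf_le_iff {E F : Set (Fin 2 →₀ ℕ)} :
    Ideal.span (mf K '' E) ≤ Ideal.span (mf K '' F) ↔ ∀ m ∈ E, ∃ m' ∈ F, m' ≤ m := by
  constructor
  · intro h m hm
    have hx : mf K m ∈ Ideal.span (mf K '' F) := h (Ideal.subset_span ⟨m, hm, rfl⟩)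
    rw [mem_span_mf] at hx
    exact hx m (by simp [mf, support_monomial])
  · intro h
    rw [Ideal.span_le]
    rintro x ⟨m, hm, rfl⟩
    have : mf K m ∈ Ideal.span (mf K '' F) := by
      rw [mem_span_mf]
      intro m' hm'
      have hmm : m = m' := by simpa [mf, support_monomial] using hm'
      subst hmm
      exact h m hm
    exact this

/-! numeric sumsets -/

def NS (A : Finset ℕ) : ℕ → Set ℕ
  | 0 => {0}
  | n + 1 => (A : Set ℕ) + NS A n

lemma NS_bound {A : Finset ℕ} {g : ℕ} (hA : ∀ i ∈ A, i ≤ g) :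
    ∀ n, ∀ s ∈ NS A n, s ≤ n * g := by
  intro n
  induction n with
  | zero => rintro s hs; simp only [NS, Set.mem_singleton_iff] at hs; simp [hs]
  | succ n ih =>
      rintro s hs
      obtain ⟨i, hi, t, ht, rfl⟩ := hs
      have := ih t ht
      have := hA i hi
      nlinarith [this]

lemma step_add {g p q b n : ℕ} (hb : b = g * q) (S T : Set ℕ)
    (hS : ∀ i ∈ S, i ≤ g) (hT : ∀ s ∈ T, s ≤ n * g) :
    ((fun i => vp (i * p) (b - i * q)) '' S) + ((fun s => vp (s * p) (n * b - s * q)) '' T)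
      = (fun s => vp (s * p) ((n + 1) * b - s * q)) '' (S + T) := by
  ext x
  constructor
  · rintro ⟨-, ⟨i, hi, rfl⟩, -, ⟨s, hs, rfl⟩, rfl⟩
    refine ⟨i + s, ⟨i, hi, s, hs, rfl⟩, ?_⟩
    show vp ((i + s) * p) ((n + 1) * b - (i + s) * q)
      = vp (i * p) (b - i * q) + vp (s * p) (n * b - s * q)
    rw [vp_add]
    congr 1
    · ring
    · have h1 : i * q ≤ b := by subst hb; exact Nat.mul_le_mul_right q (hS i hi)
      have h2 : s * q ≤ n * b := by
        subst hb
        calc s * q ≤ n * g * q := Nat.mul_le_mul_right q (hT s hs)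
        _ = n * (g * q) := by ring
      have h3 : (i + s) * q = i * q + s * q := by ring
      have h4 : (n + 1) * b = n * b + b := by ring
      omega
  · rintro ⟨-, ⟨i, hi, s, hs, rfl⟩, rfl⟩
    refine ⟨vp (i * p) (b - i * q), ⟨i, hi, rfl⟩, vp (s * p) (n * b - s * q), ⟨s, hs, rfl⟩, ?_⟩
    show vp (i * p) (b - i * q) + vp (s * p) (n * b - s * q)
      = vp ((i + s) * p) ((n + 1) * b - (i + s) * q)
    rw [vp_add]
    congr 1
    · ring
    · have h1 : i * q ≤ b := by subst hb; exact Nat.mul_le_mul_right q (hS i hi)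
      have h2 : s * q ≤ n * b := by
        subst hb
        calc s * q ≤ n * g * q := Nat.mul_le_mul_right q (hT s hs)
        _ = n * (g * q) := by ring
      have h3 : (i + s) * q = i * q + s * q := by ring
      have h4 : (n + 1) * b = n * b + b := by ring
      omega

lemma sumE_eq {g p q b : ℕ} (hb : b = g * q) (A : Finset ℕ) (hA : ∀ i ∈ A, i ≤ g) (n : ℕ) :
    sumE ((fun i => vp (i * p) (b - i * q)) '' (A : Set ℕ)) n
      = (fun s => vp (s * p) (n * b - s * q)) '' NS A n := by
  induction n with
  | zero =>
      simp only [sumE, NS, Set.image_singleton]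
      norm_num
  | succ n ih =>
      rw [sumE, ih, step_add hb (A : Set ℕ) (NS A n) hA (NS_bound hA n)]
      rfl

lemma ideal_eq_iff (K : Type*) [Field K] {a b : ℕ} (ha : 0 < a) (hb : 0 < b)
    (A : Finset ℕ) (hA1 : ({0, Nat.gcd a b} : Finset ℕ) ⊆ A)
    (hA2 : A ⊆ Finset.range (Nat.gcd a b + 1)) (r : ℕ) :
    (IA K a b A) ^ (r + 1) = Jab K a b * (IA K a b A) ^ r ↔
      NS A (r + 1) ⊆ ({0, Nat.gcd a b} : Set ℕ) + NS A r := by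
  set g := Nat.gcd a b with hgdef
  set p := a / g with hpdef
  set q := b / g with hqdef
  have hga : g * p = a := Nat.mul_div_cancel' (Nat.gcd_dvd_left a b)
  have hgb : g * q = b := Nat.mul_div_cancel' (Nat.gcd_dvd_right a b)
  have hg : 0 < g := Nat.gcd_pos_of_pos_left b ha
  have hp : 0 < p := Nat.div_pos (Nat.le_of_dvd ha (Nat.gcd_dvd_left a b)) hg
  have hq : 0 < q := Nat.div_pos (Nat.le_of_dvd hb (Nat.gcd_dvd_right a b)) hg
  have hb' : b = g * q := hgb.symm
  have hAle : ∀ i ∈ A, i ≤ g := by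
    intro i hi
    have := hA2 hi
    simp only [Finset.mem_range] at this
    omega
  have h0A : (0 : ℕ) ∈ A := hA1 (by simp)
  have hgA : g ∈ A := hA1 (by simp)
  -- rewrite the ideals as monomial spans
  have hIA : IA K a b A
      = Ideal.span (mf K '' ((fun i => vp (i * p) (b - i * q)) '' (A : Set ℕ))) := by
    have hfun : (fun i : ℕ => mono K (i * (a / Nat.gcd a b)) (b - i * (b / Nat.gcd a b)))
        = fun i : ℕ => mf K (vp (i * p) (b - i * q)) := by
      funext i
      rw [mono_eq]
    rw [IA, hfun, ← Set.image_image (mf K) (fun i => vp (i * p) (b - i * q))]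
  have hJ : Jab K a b
      = Ideal.span (mf K '' ((fun i => vp (i * p) (b - i * q)) '' ({g, 0} : Set ℕ))) := by
    rw [Jab, Set.image_pair, Set.image_pair]
    have e1 : vp (g * p) (b - g * q) = vp a 0 := by rw [hga, hgb, Nat.sub_self]
    have e2 : vp (0 * p) (b - 0 * q) = vp 0 b := by norm_num
    rw [e1, e2, mono_eq K a 0, mono_eq K 0 b]
  -- the two sides as images of numeric sets
  have hSle : ∀ i ∈ ({g, 0} : Set ℕ), i ≤ g := by
    rintro i (rfl | rfl) <;> omega
  have hpow : ∀ n : ℕ, (IA K a b A) ^ n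
      = Ideal.span (mf K '' ((fun s => vp (s * p) (n * b - s * q)) '' NS A n)) := by
    intro n
    rw [hIA, span_mf_pow, sumE_eq hb' A hAle]
  have hmul : Jab K a b * (IA K a b A) ^ r
      = Ideal.span (mf K ''
          ((fun s => vp (s * p) ((r + 1) * b - s * q)) '' (({g, 0} : Set ℕ) + NS A r))) := by
    rw [hpow r, hJ, span_mf_mul, step_add hb' ({g, 0} : Set ℕ) (NS A r) hSle (NS_bound hAle r)]
  have hYX : (({g, 0} : Set ℕ) + NS A r) ⊆ NS A (r + 1) := by
    rintro x ⟨i, hi, t, ht, rfl⟩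
    exact ⟨i, by rcases hi with rfl | rfl; exact hgA; exact h0A, t, ht, rfl⟩
  have halways : Jab K a b * (IA K a b A) ^ r ≤ (IA K a b A) ^ (r + 1) := by
    rw [hmul, hpow (r + 1), span_mf_le_iff]
    rintro m ⟨s, hs, rfl⟩
    exact ⟨_, ⟨s, hYX hs, rfl⟩, le_refl _⟩
  have hpair : ({0, g} : Set ℕ) = ({g, 0} : Set ℕ) := Set.pair_comm 0 g
  rw [hpair]
  constructor
  · intro h s hs
    have hle : (IA K a b A) ^ (r + 1) ≤ Jab K a b * (IA K a b A) ^ r := le_of_eq h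
    rw [hmul, hpow (r + 1), span_mf_le_iff] at hle
    obtain ⟨m', ⟨s', hs', rfl⟩, hm'⟩ := hle _ ⟨s, hs, rfl⟩
    rw [vp_le_iff] at hm'
    obtain ⟨h1, h2⟩ := hm'
    have hs'le : s' ≤ s := Nat.le_of_mul_le_mul_right h1 hp
    have hsb : s * q ≤ (r + 1) * b := by
      have := NS_bound hAle (r + 1) s hs
      calc s * q ≤ (r + 1) * g * q := Nat.mul_le_mul_right q this
      _ = (r + 1) * b := by rw [mul_assoc, hgb]
    have hs'b : s' * q ≤ (r + 1) * b := by
      have := NS_bound hAle (r + 1) s' (hYX hs')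
      calc s' * q ≤ (r + 1) * g * q := Nat.mul_le_mul_right q this
      _ = (r + 1) * b := by rw [mul_assoc, hgb]
    have hss' : s ≤ s' := Nat.le_of_mul_le_mul_right (by omega) hq
    obtain rfl : s' = s := le_antisymm hs'le hss'
    exact hs'
  · intro h
    refine le_antisymm ?_ halways
    rw [hmul, hpow (r + 1), span_mf_le_iff]
    rintro m ⟨s, hs, rfl⟩
    exact ⟨_, ⟨s, h hs, rfl⟩, le_refl _⟩

lemma redNum_eq (K : Type*) [Field K] {a b : ℕ} (ha : 0 < a) (hb : 0 < b)
    (A : Finset ℕ) (hA1 : ({0, Nat.gcd a b} : Finset ℕ) ⊆ A)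
    (hA2 : A ⊆ Finset.range (Nat.gcd a b + 1)) :
    redNum K a b (IA K a b A)
      = sInf {r : ℕ | NS A (r + 1) ⊆ ({0, Nat.gcd a b} : Set ℕ) + NS A r} := by
  unfold redNum
  congr 1
  ext r
  exact ideal_eq_iff K ha hb A hA1 hA2 r

lemma mem_NS_iff {A : Finset ℕ} {n s : ℕ} :
    s ∈ NS A n ↔ ∃ M : Multiset ℕ, (∀ x ∈ M, x ∈ A) ∧ Multiset.card M = n ∧ M.sum = s := by
  induction n generalizing s with
  | zero =>
      simp only [NS, Set.mem_singleton_iff]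
      constructor
      · rintro rfl
        exact ⟨0, by simp, by simp, by simp⟩
      · rintro ⟨M, hM, hcard, rfl⟩
        rw [Multiset.card_eq_zero] at hcard
        simp [hcard]
  | succ n ih =>
      constructor
      · rintro ⟨i, hi, t, ht, rfl⟩
        obtain ⟨M, hM, hcard, rfl⟩ := ih.mp ht
        exact ⟨i ::ₘ M, by
          intro x hx
          rcases Multiset.mem_cons.mp hx with rfl | hx
          · exact hi
          · exact hM x hx, by simp [hcard], by simp⟩
      · rintro ⟨M, hM, hcard, rfl⟩
        have : ∃ x, x ∈ M := Multiset.card_pos_iff_exists_mem.mp (by omega)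
        obtain ⟨x, hx⟩ := this
        have hMx : M = x ::ₘ M.erase x := (Multiset.cons_erase hx).symm
        refine ⟨x, hM x hx, (M.erase x).sum, ?_, ?_⟩
        · refine ih.mpr ⟨M.erase x, fun y hy => hM y (Multiset.mem_of_mem_erase hy), ?_, rfl⟩
          rw [Multiset.card_erase_of_mem hx, hcard]
          rfl
        · rw [hMx]
          simp [Multiset.sum_cons]

lemma NS_mono {A : Finset ℕ} (h0 : (0 : ℕ) ∈ A) {m n : ℕ} (hmn : m ≤ n) :
    NS A m ⊆ NS A n := by
  intro s hs
  obtain ⟨M, hM, hcard, rfl⟩ := mem_NS_iff.mp hs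
  refine mem_NS_iff.mpr ⟨M + Multiset.replicate (n - m) 0, ?_, by simp [hcard]; omega, by simp⟩
  intro x hx
  rcases Multiset.mem_add.mp hx with hx | hx
  · exact hM x hx
  · rw [Multiset.eq_of_mem_replicate hx]; exact h0

lemma mem_NS_triple {e g n s : ℕ} :
    s ∈ NS ({0, e, g} : Finset ℕ) n ↔ ∃ k l : ℕ, k + l ≤ n ∧ s = k * e + l * g := by
  induction n generalizing s with
  | zero =>
      simp only [NS, Set.mem_singleton_iff]
      constructor
      · rintro rfl; exact ⟨0, 0, by omega, by ring⟩
      · rintro ⟨k, l, hkl, rfl⟩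
        have : k = 0 ∧ l = 0 := by omega
        simp [this.1, this.2]
  | succ n ih =>
      constructor
      · rintro ⟨i, hi, t, ht, rfl⟩
        obtain ⟨k, l, hkl, rfl⟩ := ih.mp ht
        simp only [Finset.coe_insert, Set.mem_insert_iff, Finset.coe_singleton,
          Set.mem_singleton_iff] at hi
        rcases hi with rfl | rfl | rfl
        · exact ⟨k, l, by omega, by ring⟩
        · exact ⟨k + 1, l, by omega, by ring⟩
        · exact ⟨k, l + 1, by omega, by ring⟩
      · rintro ⟨k, l, hkl, rfl⟩
        rcases Nat.eq_zero_or_pos k with rfl | hk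
        · rcases Nat.eq_zero_or_pos l with rfl | hl
          · exact ⟨0, by simp, 0, ih.mpr ⟨0, 0, by omega, by ring⟩, by ring⟩
          · obtain ⟨l, rfl⟩ : ∃ l', l = l' + 1 := ⟨l - 1, by omega⟩
            refine ⟨g, by simp, 0 * e + l * g, ih.mpr ⟨0, l, by omega, rfl⟩, by ring⟩
        · obtain ⟨k, rfl⟩ : ∃ k', k = k' + 1 := ⟨k - 1, by omega⟩
          refine ⟨e, by simp, k * e + l * g, ih.mpr ⟨k, l, by omega, rfl⟩, by ring⟩

lemma triple_C (e g : ℕ) (he1 : 1 ≤ e) (he2 : e ≤ g - 1) (hg : 2 ≤ g) :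
    NS ({0, e, g} : Finset ℕ) (g - 1 + 1)
      ⊆ ({0, g} : Set ℕ) + NS ({0, e, g} : Finset ℕ) (g - 1) := by
  intro s hs
  have hg1 : g - 1 + 1 = g := by omega
  rw [hg1] at hs
  obtain ⟨k, l, hkl, rfl⟩ := mem_NS_triple.mp hs
  rcases Nat.lt_or_ge (k + l) g with hlt | hge
  · exact ⟨0, Or.inl rfl, k * e + l * g,
      mem_NS_triple.mpr ⟨k, l, by omega, rfl⟩, zero_add _⟩
  · have hkl' : k + l = g := by omega
    rcases Nat.eq_zero_or_pos l with rfl | hl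
    · -- k = g, s = g * e = g + (e-1)*g
      have hk : k = g := by omega
      obtain ⟨e', rfl⟩ : ∃ e', e = e' + 1 := ⟨e - 1, by omega⟩
      refine ⟨g, Or.inr rfl, 0 * (e' + 1) + (e' + 1 - 1) * g,
        mem_NS_triple.mpr ⟨0, e' + 1 - 1, by omega, rfl⟩, ?_⟩
      show g + (0 * (e' + 1) + (e' + 1 - 1) * g) = k * (e' + 1) + 0 * g
      rw [hk]
      simp only [Nat.add_sub_cancel]
      ring
    · obtain ⟨l', rfl⟩ : ∃ l'', l = l'' + 1 := ⟨l - 1, by omega⟩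
      refine ⟨g, Or.inr rfl, k * e + l' * g,
        mem_NS_triple.mpr ⟨k, l', by omega, rfl⟩, by ring⟩

lemma triple_not_C (e g : ℕ) (he1 : 1 ≤ e) (he2 : e ≤ g - 1) (hcop : Nat.gcd e g = 1)
    {r : ℕ} (hr : r < g - 1) :
    ¬ (NS ({0, e, g} : Finset ℕ) (r + 1)
        ⊆ ({0, g} : Set ℕ) + NS ({0, e, g} : Finset ℕ) r) := by
  intro h
  have hg : 2 ≤ g := by omega
  have hs : (r + 1) * e ∈ NS ({0, e, g} : Finset ℕ) (r + 1) :=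
    mem_NS_triple.mpr ⟨r + 1, 0, by omega, by ring⟩
  obtain ⟨c, hc, t, ht, heq⟩ := h hs
  obtain ⟨k, l, hkl, rfl⟩ := mem_NS_triple.mp ht
  -- (r+1)*e = c + k*e + l*g  with c ∈ {0,g}
  have heq2 : c + (k * e + l * g) = (r + 1) * e := heq
  have hexp : (l + 1) * g = l * g + g := by ring
  have hl' : ∃ l' : ℕ, (r + 1) * e = k * e + l' * g := by
    rcases hc with rfl | rfl
    · exact ⟨l, by omega⟩
    · exact ⟨l + 1, by omega⟩
  obtain ⟨l', heq'⟩ := hl'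
  have hkr : k ≤ r := by omega
  have hsub : (r + 1 - k) * e = l' * g := by
    have h1 : (r + 1) * e = (r + 1 - k) * e + k * e := by
      rw [← Nat.add_mul]
      congr 1
      omega
    omega
  have hdvd : g ∣ (r + 1 - k) * e := ⟨l', by rw [hsub]; ring⟩
  have hcop' : Nat.Coprime g e := (Nat.coprime_comm.mp hcop)
  have hdvd' : g ∣ (r + 1 - k) := hcop'.dvd_of_dvd_mul_right hdvd
  have hpos : 0 < r + 1 - k := by omega
  have := Nat.le_of_dvd hpos hdvd'
  omega

/-! zero-sum machinery -/

lemma block_zero_sum {g : ℕ} (L : List ℕ) {i j : ℕ} (hij : i < j) (hj : j ≤ L.length)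
    (hmod : (L.take i).sum ≡ (L.take j).sum [MOD g]) :
    ∃ B : Multiset ℕ, B ≠ 0 ∧ B ≤ (L : Multiset ℕ) ∧ g ∣ B.sum := by
  set B0 : List ℕ := (L.drop i).take (j - i) with hB0
  have htake : L.take j = L.take i ++ B0 := by
    rw [hB0, ← List.take_add]
    congr 1
    omega
  have hsum : (L.take j).sum = (L.take i).sum + B0.sum := by
    rw [htake, List.sum_append]
  have hdvd : g ∣ B0.sum := by
    have h1 : (L.take i).sum ≤ (L.take j).sum := by omega
    have h2 := (Nat.modEq_iff_dvd' h1).mp hmod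
    have h3 : (L.take j).sum - (L.take i).sum = B0.sum := by omega
    rwa [h3] at h2
  have hlen : B0.length = j - i := by
    rw [hB0, List.length_take, List.length_drop]
    omega
  have hne : B0 ≠ [] := by
    intro h
    rw [h] at hlen
    simp at hlen
    omega
  have hinf : List.Sublist B0 L :=
    (List.take_sublist _ _).trans (List.drop_sublist _ _)
  exact ⟨(B0 : Multiset ℕ), by simpa using hne, Multiset.coe_le.mpr hinf.subperm, hdvd⟩

lemma take_sum_swap (c c' : ℕ) (T : List ℕ) (m : ℕ) :
    ((c :: c' :: T).take (m + 2)).sum = ((c' :: c :: T).take (m + 2)).sum := by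
  simp [List.take_succ_cons]
  omega

lemma zero_block_or_replicate {g : ℕ} (hg : 2 ≤ g) (M : Multiset ℕ)
    (hcard : Multiset.card M = g - 1) (hmem : ∀ x ∈ M, 1 ≤ x ∧ x ≤ g - 1) :
    (∃ B : Multiset ℕ, B ≠ 0 ∧ B ≤ M ∧ g ∣ B.sum)
      ∨ ∃ c, M = Multiset.replicate (g - 1) c := by
  by_cases hrep : ∃ c, M = Multiset.replicate (g - 1) c
  · exact Or.inr hrep
  left
  have hpos : 0 < Multiset.card M := by omega
  obtain ⟨c, hc⟩ := Multiset.card_pos_iff_exists_mem.mp hpos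
  have hnotall : ¬ ∀ x ∈ M, x = c := by
    intro hall
    exact hrep ⟨c, Multiset.eq_replicate.mpr ⟨hcard, hall⟩⟩
  push_neg at hnotall
  obtain ⟨c', hc', hcc'⟩ := hnotall
  have hc'e : c' ∈ M.erase c := Multiset.mem_erase_of_ne hcc' |>.mpr hc'
  set rest := (M.erase c).erase c' with hrest
  have hM1 : M.erase c = c' ::ₘ rest := (Multiset.cons_erase hc'e).symm
  have hM : M = c ::ₘ c' ::ₘ rest := by
    conv_lhs => rw [← Multiset.cons_erase hc, hM1]
  set T := rest.toList with hT
  have hTr : (T : Multiset ℕ) = rest := Multiset.coe_toList rest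
  set L : List ℕ := c :: c' :: T with hL
  set L' : List ℕ := c' :: c :: T with hL'
  have hLM : (L : Multiset ℕ) = M := by
    rw [hL, hM]
    show c ::ₘ c' ::ₘ (T : Multiset ℕ) = c ::ₘ c' ::ₘ rest
    rw [hTr]
  have hL'M : (L' : Multiset ℕ) = M := by
    rw [hL', hM]
    show c' ::ₘ c ::ₘ (T : Multiset ℕ) = c ::ₘ c' ::ₘ rest
    rw [hTr, Multiset.cons_swap]
  have hlen : L.length = g - 1 := by
    have := congrArg Multiset.card hLM
    simpa [hcard] using this
  have hlen' : L'.length = g - 1 := by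
    have := congrArg Multiset.card hL'M
    simpa [hcard] using this
  haveI : NeZero g := ⟨by omega⟩
  have hcint : 1 ≤ c ∧ c ≤ g - 1 := hmem c hc
  have hc'int : 1 ≤ c' ∧ c' ≤ g - 1 := hmem c' hc'
  set f : Fin (g + 1) → ZMod g := fun i =>
    if (i : ℕ) = 0 then ((L'.take 1).sum : ZMod g) else ((L.take ((i : ℕ) - 1)).sum : ZMod g)
    with hf
  have key : ∀ u v : Fin (g + 1), (u : ℕ) < (v : ℕ) → f u = f v →
      ∃ B : Multiset ℕ, B ≠ 0 ∧ B ≤ M ∧ g ∣ B.sum := by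
    intro u v huv hfuv
    have hvne : ((v : ℕ) = 0) = False := eq_false (by omega)
    have hvbound : (v : ℕ) ≤ g := by omega
    rcases Nat.eq_zero_or_pos (u : ℕ) with hu0 | hu1
    · -- u = 0 : f u = c'
      have hfu : f u = ((c' : ℕ) : ZMod g) := by
        rw [hf]
        simp [hu0, hL']
      have hfv : f v = ((L.take ((v : ℕ) - 1)).sum : ZMod g) := by
        rw [hf]
        simp only [hvne, if_false]
      have hmod : c' ≡ (L.take ((v : ℕ) - 1)).sum [MOD g] := by
        rw [← ZMod.natCast_eq_natCast_iff]
        rw [← hfu, ← hfv, hfuv]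
      rcases Nat.lt_or_ge ((v : ℕ) - 1) 1 with hv1 | hv1
      · -- v = 1 : c' ≡ 0
        have : (v : ℕ) - 1 = 0 := by omega
        rw [this] at hmod
        simp at hmod
        have : g ∣ c' := (Nat.modEq_zero_iff_dvd).mp hmod
        have := Nat.le_of_dvd (by omega) this
        omega
      rcases Nat.lt_or_ge ((v : ℕ) - 1) 2 with hv2 | hv2
      · -- v = 2 : c' ≡ c
        have hveq : (v : ℕ) - 1 = 1 := by omega
        rw [hveq] at hmod
        have : (L.take 1).sum = c := by rw [hL]; simp
        rw [this] at hmod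
        have : c' = c := by
          have h1 : c' % g = c % g := hmod
          rw [Nat.mod_eq_of_lt (by omega), Nat.mod_eq_of_lt (by omega)] at h1
          exact h1
        exact absurd this hcc'
      · -- v ≥ 3 : use swapped list
        obtain ⟨m, hm⟩ : ∃ m, (v : ℕ) - 1 = m + 2 := ⟨(v : ℕ) - 3, by omega⟩
        have hswap : (L.take ((v : ℕ) - 1)).sum = (L'.take ((v : ℕ) - 1)).sum := by
          rw [hm, hL, hL']
          exact take_sum_swap c c' T m
        have hone : (L'.take 1).sum = c' := by rw [hL']; simp
        have hmod' : (L'.take 1).sum ≡ (L'.take ((v : ℕ) - 1)).sum [MOD g] := by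
          rw [hone, ← hswap]
          exact hmod
        obtain ⟨B, h1, h2, h3⟩ := block_zero_sum L' (by omega : 1 < (v : ℕ) - 1)
          (by omega) hmod'
        exact ⟨B, h1, hL'M ▸ h2, h3⟩
    · -- 1 ≤ u
      have hune : ((u : ℕ) = 0) = False := eq_false (by omega)
      have hfu : f u = ((L.take ((u : ℕ) - 1)).sum : ZMod g) := by
        rw [hf]; simp only [hune, if_false]
      have hfv : f v = ((L.take ((v : ℕ) - 1)).sum : ZMod g) := by
        rw [hf]; simp only [hvne, if_false]
      have hmod : (L.take ((u : ℕ) - 1)).sum ≡ (L.take ((v : ℕ) - 1)).sum [MOD g] := by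
        rw [← ZMod.natCast_eq_natCast_iff, ← hfu, ← hfv, hfuv]
      obtain ⟨B, h1, h2, h3⟩ := block_zero_sum L (by omega : (u : ℕ) - 1 < (v : ℕ) - 1)
        (by omega) hmod
      exact ⟨B, h1, hLM ▸ h2, h3⟩
  obtain ⟨x, y, hxy, hfxy⟩ := Fintype.exists_ne_map_eq_of_card_lt f
    (by rw [ZMod.card, Fintype.card_fin]; omega)
  rcases Nat.lt_or_ge (x : ℕ) (y : ℕ) with h | h
  · exact key x y h hfxy
  · have : (y : ℕ) < (x : ℕ) := by
      rcases Nat.lt_or_ge (y : ℕ) (x : ℕ) with h' | h'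
      · exact h'
      · exact absurd (Fin.ext (by omega)) hxy
    exact key y x this hfxy.symm

lemma replicate_gcd_block {g c : ℕ} (hg : 2 ≤ g) (hc1 : 1 ≤ c) (hc2 : c ≤ g - 1)
    (hd : 2 ≤ Nat.gcd c g) :
    ∃ B : Multiset ℕ, B ≠ 0 ∧ B ≤ Multiset.replicate (g - 1) c ∧ g ∣ B.sum := by
  set d := Nat.gcd c g with hdd
  have hdc : d ∣ c := Nat.gcd_dvd_left c g
  have hdg : d ∣ g := Nat.gcd_dvd_right c g
  have hgd : g / d ≤ g - 1 := by
    have h1 : g / d ≤ g / 2 := Nat.div_le_div_left hd (by omega)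
    have h2 : g / 2 ≤ g - 1 := by omega
    omega
  have hgdpos : 0 < g / d := Nat.div_pos (Nat.le_of_dvd (by omega) hdg) (by omega)
  refine ⟨Multiset.replicate (g / d) c, ?_, ?_, ?_⟩
  · intro h
    have := congrArg Multiset.card h
    simp only [Multiset.card_replicate, Multiset.card_zero] at this
    omega
  · exact (Multiset.replicate_le_replicate c).mpr hgd
  · rw [Multiset.sum_replicate, smul_eq_mul]
    refine ⟨c / d, ?_⟩
    obtain ⟨c', hc'⟩ := hdc
    obtain ⟨g', hg'⟩ := hdg
    have hdpos : 0 < d := by omega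
    rw [hc', hg']
    rw [Nat.mul_div_cancel_left c' hdpos, Nat.mul_div_cancel_left g' hdpos]
    ring

lemma reduce_by_block {g : ℕ} (hg : 2 ≤ g) (A : Finset ℕ) (h0 : (0 : ℕ) ∈ A) (hgA : g ∈ A)
    (M : Multiset ℕ) (hMA : ∀ x ∈ M, x ∈ A) (hcard : Multiset.card M = g - 1)
    (hint : ∀ x ∈ M, x ≤ g - 1)
    (B : Multiset ℕ) (hB0 : B ≠ 0) (hBM : B ≤ M) (hdvd : g ∣ B.sum) :
    M.sum ∈ NS A (g - 2) := by
  obtain ⟨γ, hγ⟩ := hdvd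
  have hBcard : 1 ≤ Multiset.card B := by
    have : 0 < Multiset.card B := Multiset.card_pos.mpr hB0
    omega
  have hBsum_le : B.sum ≤ Multiset.card B * (g - 1) := by
    have := Multiset.sum_le_card_nsmul B (g - 1)
      (fun x hx => hint x (Multiset.mem_of_le hBM hx))
    simpa [smul_eq_mul] using this
  have hγlt : γ < Multiset.card B := by
    by_contra hcon
    push_neg at hcon
    have h1 : Multiset.card B * g ≤ γ * g := Nat.mul_le_mul_right g hcon
    have h2 : Multiset.card B * g = Multiset.card B * (g - 1) + Multiset.card B := by
      obtain ⟨g', rfl⟩ : ∃ g', g = g' + 1 := ⟨g - 1, by omega⟩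
      simp [Nat.mul_succ]
    have h3 : γ * g = g * γ := Nat.mul_comm γ g
    omega
  set rest := M - B with hrest
  have hMrest : rest + B = M := tsub_add_cancel_of_le hBM
  have hsum : M.sum = rest.sum + B.sum := by
    rw [← hMrest, Multiset.sum_add]
  have hcardrest : Multiset.card rest + Multiset.card B = g - 1 := by
    have := congrArg Multiset.card hMrest
    simpa [hcard] using this
  set M' := rest + Multiset.replicate γ g with hM'
  have hsum' : M'.sum = M.sum := by
    rw [hM', Multiset.sum_add, Multiset.sum_replicate, smul_eq_mul, hsum, hγ]
    ring
  have hcard' : Multiset.card M' = Multiset.card rest + γ := by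
    simp [hM']
  have hmem' : ∀ x ∈ M', x ∈ A := by
    intro x hx
    rcases Multiset.mem_add.mp hx with hx | hx
    · exact hMA x (Multiset.mem_of_le (hMrest ▸ Multiset.le_add_right rest B) hx)
    · rw [Multiset.eq_of_mem_replicate hx]
      exact hgA
  have hmem : M.sum ∈ NS A (Multiset.card rest + γ) := by
    rw [← hsum']
    exact mem_NS_iff.mpr ⟨M', hmem', hcard', rfl⟩
  exact NS_mono h0 (by omega) hmem

lemma coprime_replicate_case {g c o : ℕ} (hg : 2 ≤ g) (A : Finset ℕ) (h0 : (0 : ℕ) ∈ A)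
    (hgA : g ∈ A) (hcA : c ∈ A) (hoA : o ∈ A)
    (hc1 : 1 ≤ c) (hc2 : c ≤ g - 1) (ho1 : 1 ≤ o) (ho2 : o ≤ g - 1) (hoc : o ≠ c)
    (hcop : Nat.gcd c g = 1) :
    (Multiset.replicate (g - 1) c).sum ∈ ({0, g} : Set ℕ) + NS A (g - 2) := by
  haveI : NeZero g := ⟨by omega⟩
  have hex : ∃ k, 1 ≤ k ∧ k < g ∧ k * c ≡ o [MOD g] := by
    set u : ZMod g := (o : ZMod g) * (c : ZMod g)⁻¹ with hu
    have hkg : u.val < g := ZMod.val_lt u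
    have hunit : IsUnit ((c : ℕ) : ZMod g) := (ZMod.isUnit_iff_coprime c g).mpr hcop
    have hmodZ : ((u.val * c : ℕ) : ZMod g) = ((o : ℕ) : ZMod g) := by
      push_cast
      rw [ZMod.natCast_val, ZMod.cast_id, hu, mul_assoc, ZMod.inv_mul_of_unit _ hunit,
        mul_one]
    have hmod : u.val * c ≡ o [MOD g] := (ZMod.natCast_eq_natCast_iff _ _ _).mp hmodZ
    refine ⟨u.val, ?_, hkg, hmod⟩
    by_contra hcon
    have hk0 : u.val = 0 := by omega
    rw [hk0, zero_mul] at hmod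
    have hdvd : g ∣ o := (Nat.modEq_zero_iff_dvd).mp hmod.symm
    have := Nat.le_of_dvd (by omega) hdvd
    omega
  obtain ⟨k, hk1, hkg, hmod⟩ := hex
  have hkc1 : 1 ≤ k * c := Nat.mul_pos hk1 hc1
  have hok : o ≤ k * c := by
    by_contra hcon
    push_neg at hcon
    have hdvd := (Nat.modEq_iff_dvd' (le_of_lt hcon)).mp hmod
    have hle := Nat.le_of_dvd (by omega) hdvd
    omega
  obtain ⟨γ, hγ⟩ := (Nat.modEq_iff_dvd' hok).mp hmod.symm
  have hcomm : g * γ = γ * g := Nat.mul_comm g γ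
  have hγeq : k * c = o + γ * g := by omega
  have hγk : γ < k := by
    have h1 : k * c ≤ k * (g - 1) := Nat.mul_le_mul_left k hc2
    have h2 : k * (g - 1) + k = k * g := by
      obtain ⟨g', rfl⟩ : ∃ g', g = g' + 1 := ⟨g - 1, by omega⟩
      simp [Nat.mul_succ]
    have h4 : γ * g < k * g := by omega
    exact Nat.lt_of_mul_lt_mul_right h4
  have hsumrep : (Multiset.replicate (g - 1) c).sum = (g - 1) * c := by
    rw [Multiset.sum_replicate, smul_eq_mul]
  have hexpand : (g - 1) * c = (g - 1 - k) * c + k * c := by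
    have h5 : (g - 1 - k) * c = (g - 1) * c - k * c := Nat.sub_mul (g - 1) k c
    have h6 : k * c ≤ (g - 1) * c := Nat.mul_le_mul_right c (by omega)
    omega
  rcases Nat.eq_zero_or_pos γ with hγ0 | hγpos
  · -- γ = 0 : k * c = o with k ≥ 2
    have hzg : γ * g = 0 := by rw [hγ0, zero_mul]
    have hkc : k * c = o := by omega
    have hk2 : 2 ≤ k := by
      by_contra hcon
      have hke : k = 1 := by omega
      rw [hke, one_mul] at hkc
      exact hoc hkc.symm
    set M' := Multiset.replicate (g - 1 - k) c + ({o} : Multiset ℕ) with hM'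
    have hcard' : Multiset.card M' = g - 1 - k + 1 := by simp [hM']
    have hsum' : M'.sum = (g - 1 - k) * c + o := by
      rw [hM', Multiset.sum_add, Multiset.sum_replicate, smul_eq_mul, Multiset.sum_singleton]
    have hmemA : ∀ x ∈ M', x ∈ A := by
      intro x hx
      rcases Multiset.mem_add.mp hx with hx | hx
      · rw [Multiset.eq_of_mem_replicate hx]; exact hcA
      · rw [Multiset.mem_singleton.mp hx]; exact hoA
    have hmem : (g - 1 - k) * c + o ∈ NS A (g - 2) :=
      NS_mono h0 (by omega) (mem_NS_iff.mpr ⟨M', hmemA, hcard', hsum'⟩)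
    exact ⟨0, Or.inl rfl, (g - 1 - k) * c + o, hmem, by
      show 0 + ((g - 1 - k) * c + o) = (Multiset.replicate (g - 1) c).sum
      rw [hsumrep]
      omega⟩
  · -- γ ≥ 1
    set M' := Multiset.replicate (g - 1 - k) c + ({o} : Multiset ℕ)
      + Multiset.replicate (γ - 1) g with hM'
    have hcard' : Multiset.card M' = g - 1 - k + 1 + (γ - 1) := by simp [hM']
    have hsum' : M'.sum = (g - 1 - k) * c + o + (γ - 1) * g := by
      rw [hM', Multiset.sum_add, Multiset.sum_add, Multiset.sum_replicate, smul_eq_mul,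
        Multiset.sum_singleton, Multiset.sum_replicate, smul_eq_mul]
    have hmemA : ∀ x ∈ M', x ∈ A := by
      intro x hx
      rcases Multiset.mem_add.mp hx with hx | hx
      · rcases Multiset.mem_add.mp hx with hx | hx
        · rw [Multiset.eq_of_mem_replicate hx]; exact hcA
        · rw [Multiset.mem_singleton.mp hx]; exact hoA
      · rw [Multiset.eq_of_mem_replicate hx]; exact hgA
    have hmem : (g - 1 - k) * c + o + (γ - 1) * g ∈ NS A (g - 2) :=
      NS_mono h0 (by omega) (mem_NS_iff.mpr ⟨M', hmemA, hcard', hsum'⟩)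
    refine ⟨g, Or.inr rfl, (g - 1 - k) * c + o + (γ - 1) * g, hmem, ?_⟩
    show g + ((g - 1 - k) * c + o + (γ - 1) * g) = (Multiset.replicate (g - 1) c).sum
    rw [hsumrep]
    have h7 : (γ - 1) * g + g = γ * g := by
      obtain ⟨γ', rfl⟩ : ∃ γ', γ = γ' + 1 := ⟨γ - 1, by omega⟩
      simp [Nat.succ_mul]
    omega

lemma general_C {g : ℕ} (hg : 2 ≤ g) (A : Finset ℕ) (h0 : (0 : ℕ) ∈ A) (hgA : g ∈ A)
    (hAle : ∀ i ∈ A, i ≤ g)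
    (hnot : ¬ ∃ e, 1 ≤ e ∧ e ≤ g - 1 ∧ Nat.gcd e g = 1 ∧ A = ({0, e, g} : Finset ℕ)) :
    NS A (g - 2 + 1) ⊆ ({0, g} : Set ℕ) + NS A (g - 2) := by
  intro s hs
  have hg21 : g - 2 + 1 = g - 1 := by omega
  rw [hg21] at hs
  obtain ⟨M, hMA, hcard, rfl⟩ := mem_NS_iff.mp hs
  by_cases hbound : ∃ x ∈ M, x = 0 ∨ x = g
  · obtain ⟨x, hx, hx0g⟩ := hbound
    have hM : M = x ::ₘ M.erase x := (Multiset.cons_erase hx).symm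
    refine ⟨x, by rcases hx0g with rfl | rfl; exacts [Or.inl rfl, Or.inr rfl],
      (M.erase x).sum, ?_, ?_⟩
    · refine mem_NS_iff.mpr ⟨M.erase x, fun y hy => hMA y (Multiset.mem_of_mem_erase hy), ?_, rfl⟩
      rw [Multiset.card_erase_of_mem hx, hcard, Nat.pred_eq_sub_one]
      omega
    · show x + (M.erase x).sum = M.sum
      conv_rhs => rw [hM]
      simp [Multiset.sum_cons]
  · push_neg at hbound
    have hint : ∀ x ∈ M, 1 ≤ x ∧ x ≤ g - 1 := by
      intro x hx
      have h1 := hAle x (hMA x hx)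
      have h2 := hbound x hx
      omega
    rcases zero_block_or_replicate hg M hcard hint with ⟨B, hB0, hBM, hdvd⟩ | ⟨c, hMc⟩
    · exact ⟨0, Or.inl rfl, M.sum, reduce_by_block hg A h0 hgA M hMA hcard
        (fun x hx => (hint x hx).2) B hB0 hBM hdvd, zero_add _⟩
    · have hcM : c ∈ M := by
        rw [hMc]
        exact Multiset.mem_replicate.mpr ⟨by omega, rfl⟩
      have hcA : c ∈ A := hMA c hcM
      have hcint := hint c hcM
      by_cases hd : Nat.gcd c g = 1
      · have hsub : ({0, c, g} : Finset ℕ) ⊆ A := by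
          intro x hx
          simp only [Finset.mem_insert, Finset.mem_singleton] at hx
          rcases hx with rfl | rfl | rfl
          exacts [h0, hcA, hgA]
        have hne : A ≠ ({0, c, g} : Finset ℕ) := fun hEq =>
          hnot ⟨c, hcint.1, hcint.2, hd, hEq⟩
        obtain ⟨o, hoA, honot⟩ : ∃ o ∈ A, o ∉ ({0, c, g} : Finset ℕ) := by
          by_contra hcon
          push_neg at hcon
          exact hne (Finset.Subset.antisymm hcon hsub)
        simp only [Finset.mem_insert, Finset.mem_singleton, not_or] at honot
        obtain ⟨ho0, hoc, hog⟩ := honot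
        have hoole := hAle o hoA
        rw [hMc]
        exact coprime_replicate_case hg A h0 hgA hcA hoA hcint.1 hcint.2
          (by omega) (by omega) hoc hd
      · have hgcdpos : 0 < Nat.gcd c g := Nat.gcd_pos_of_pos_left g hcint.1
        have hd2 : 2 ≤ Nat.gcd c g := by omega
        obtain ⟨B, hB0, hBM, hdvd⟩ := replicate_gcd_block hg hcint.1 hcint.2 hd2
        exact ⟨0, Or.inl rfl, M.sum, reduce_by_block hg A h0 hgA M hMA hcard
          (fun x hx => (hint x hx).2) B hB0 (hMc ▸ hBM) hdvd, zero_add _⟩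

end Stmt6Aux

open Stmt6Aux in
theorem stmt6 (K : Type*) [Field K] (a b : ℕ) (ha : 0 < a) (hb : 0 < b)
    (A : Finset ℕ) (hA1 : ({0, Nat.gcd a b} : Finset ℕ) ⊆ A)
    (hA2 : A ⊆ Finset.range (Nat.gcd a b + 1)) :
    redNum K a b (IA K a b A) = Nat.gcd a b - 1
      ↔ ((Nat.gcd a b = 1 ∧ IA K a b A = Jab K a b)
        ∨ ∃ e : ℕ, 1 ≤ e ∧ e ≤ Nat.gcd a b - 1 ∧ Nat.gcd e (Nat.gcd a b) = 1 ∧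
            A = ({0, e, Nat.gcd a b} : Finset ℕ)) := by
  have hg : 0 < Nat.gcd a b := Nat.gcd_pos_of_pos_left b ha
  have h0A : (0 : ℕ) ∈ A := hA1 (by simp)
  have hgA : Nat.gcd a b ∈ A := hA1 (by simp)
  have hAle : ∀ i ∈ A, i ≤ Nat.gcd a b := by
    intro i hi
    have := hA2 hi
    simp only [Finset.mem_range] at this
    omega
  rw [redNum_eq K ha hb A hA1 hA2]
  by_cases hg1 : Nat.gcd a b = 1
  · -- g = 1 : both sides hold
    have hL : sInf {r : ℕ | NS A (r + 1) ⊆ ({0, Nat.gcd a b} : Set ℕ) + NS A r} = 0 := by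
      apply Nat.sInf_eq_zero.mpr
      left
      show NS A (0 + 1) ⊆ ({0, Nat.gcd a b} : Set ℕ) + NS A 0
      rintro s ⟨i, hi, t, ht, rfl⟩
      have ht0 : t = 0 := ht
      have hi' : i ≤ Nat.gcd a b := hAle i hi
      refine ⟨i, ?_, t, ht, rfl⟩
      rcases Nat.eq_zero_or_pos i with rfl | hp
      · exact Or.inl rfl
      · right
        show i = Nat.gcd a b
        omega
    have hA01 : A = ({0, 1} : Finset ℕ) := by
      apply Finset.Subset.antisymm
      · intro i hi
        have := hAle i hi
        simp only [Finset.mem_insert, Finset.mem_singleton]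
        omega
      · intro i hi
        simp only [Finset.mem_insert, Finset.mem_singleton] at hi
        rcases hi with rfl | rfl
        · exact h0A
        · exact hg1 ▸ hgA
    have hIJ : IA K a b A = Jab K a b := by
      rw [IA, Jab, hA01]
      congr 1
      rw [show ((({0, 1} : Finset ℕ) : Set ℕ)) = ({0, 1} : Set ℕ) by simp]
      rw [Set.image_pair]
      have e0 : mono K (0 * (a / Nat.gcd a b)) (b - 0 * (b / Nat.gcd a b)) = mono K 0 b := by
        norm_num
      have e1 : mono K (1 * (a / Nat.gcd a b)) (b - 1 * (b / Nat.gcd a b)) = mono K a 0 := by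
        rw [hg1]
        simp [Nat.div_one]
      rw [e0, e1, Set.pair_comm]
    have hLHS : sInf {r : ℕ | NS A (r + 1) ⊆ ({0, Nat.gcd a b} : Set ℕ) + NS A r}
        = Nat.gcd a b - 1 := by
      rw [hL, hg1]
    exact iff_of_true hLHS (Or.inl ⟨hg1, hIJ⟩)
  · have hg2 : 2 ≤ Nat.gcd a b := by omega
    constructor
    · intro hLHS
      by_contra hR
      obtain ⟨hR1, hR2⟩ := not_or.mp hR
      have hmem : (Nat.gcd a b - 2) ∈
          {r : ℕ | NS A (r + 1) ⊆ ({0, Nat.gcd a b} : Set ℕ) + NS A r} :=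
        general_C hg2 A h0A hgA hAle hR2
      have := Nat.sInf_le hmem
      omega
    · rintro (⟨h1, -⟩ | ⟨e, he1, he2, hcop, hAeq⟩)
      · exact absurd h1 hg1
      · subst hAeq
        have hCmem : (Nat.gcd a b - 1) ∈
            {r : ℕ | NS ({0, e, Nat.gcd a b} : Finset ℕ) (r + 1)
              ⊆ ({0, Nat.gcd a b} : Set ℕ) + NS ({0, e, Nat.gcd a b} : Finset ℕ) r} :=
          triple_C e (Nat.gcd a b) he1 he2 hg2
        apply le_antisymm
        · exact Nat.sInf_le hCmem
        · apply le_csInf ⟨Nat.gcd a b - 1, hCmem⟩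
          intro r hr
          by_contra hcon
          push_neg at hcon
          exact triple_not_C e (Nat.gcd a b) he1 he2 hcop (by omega) hr
end

section
/- Let K be a field, a, b positive integers, and p = (c,d) a pair of integers with 0 < c < a, 0 < d < b and bc + ad ≥ ab. Let I_p = (x^a, y^b, x^c y^d) and J = (x^a, y^b). Then the reduction number of I_p with respect to J equals min{k ≥ 1 : x^{kc} y^{kd} ∈ J^k} − 1. -/
open MvPolynomial

open Pointwise

namespace S7

variable {K : Type*} [Field K]

noncomputable def E (u v : ℕ) : Fin 2 →₀ ℕ := Finsupp.single 0 u + Finsupp.single 1 v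

lemma E_add (u v u' v' : ℕ) : E u v + E u' v' = E (u + u') (v + v') := by
  simp only [E, Finsupp.single_add]; abel

lemma smul_E (n u v : ℕ) : n • E u v = E (n * u) (n * v) := by
  simp [E, smul_add, Finsupp.smul_single, smul_eq_mul]

lemma E_apply0 (u v : ℕ) : E u v 0 = u := by
  simp [E, Finsupp.single_apply]

lemma E_apply1 (u v : ℕ) : E u v 1 = v := by
  simp [E, Finsupp.single_apply]

lemma E_le_iff {u v u' v' : ℕ} : E u v ≤ E u' v' ↔ u ≤ u' ∧ v ≤ v' := by
  rw [Finsupp.le_def]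
  constructor
  · intro h
    exact ⟨by simpa [E_apply0] using h 0, by simpa [E_apply1] using h 1⟩
  · rintro ⟨h1, h2⟩ i
    fin_cases i <;> simpa [E_apply0, E_apply1]

lemma mono_eq (u v : ℕ) : mono K u v = monomial (E u v) (1 : K) := by
  rw [mono, X_pow_eq_monomial, X_pow_eq_monomial, monomial_mul, one_mul]; rfl

noncomputable def M (K : Type*) [Field K] : (Fin 2 →₀ ℕ) → MvPolynomial (Fin 2) K :=
  fun s => monomial s (1 : K)

lemma M_add (s t : Fin 2 →₀ ℕ) : M K (s + t) = M K s * M K t := by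
  simp [M, monomial_mul]

def iterSum : ℕ → Set (Fin 2 →₀ ℕ) → Set (Fin 2 →₀ ℕ)
  | 0, _ => {0}
  | n + 1, S => S + iterSum n S

lemma image_mul (S T : Set (Fin 2 →₀ ℕ)) :
    (M K '' S) * (M K '' T) = M K '' (S + T) := by
  ext p
  simp only [Set.mem_mul, Set.mem_image, Set.mem_add]
  constructor
  · rintro ⟨_, ⟨s, hs, rfl⟩, _, ⟨t, ht, rfl⟩, rfl⟩
    exact ⟨s + t, ⟨s, hs, t, ht, rfl⟩, by simp [M, monomial_mul]⟩
  · rintro ⟨_, ⟨s, hs, t, ht, rfl⟩, rfl⟩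
    exact ⟨_, ⟨s, hs, rfl⟩, _, ⟨t, ht, rfl⟩, by simp [M, monomial_mul]⟩

lemma span_image_pow (S : Set (Fin 2 →₀ ℕ)) (n : ℕ) :
    Ideal.span (M K '' S) ^ n = Ideal.span (M K '' iterSum n S) := by
  induction n with
  | zero => simp [iterSum, M, monomial_zero']
  | succ n ih =>
    rw [pow_succ', ih, Ideal.span_mul_span', image_mul]
    rfl

lemma monomial_mem_span_iff {t : Fin 2 →₀ ℕ} {E' : Set (Fin 2 →₀ ℕ)} :
    monomial t (1 : K) ∈ Ideal.span (M K '' E') ↔ ∃ s ∈ E', s ≤ t := by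
  rw [show M K '' E' = (fun s => monomial s (1:K)) '' E' from rfl,
    mem_ideal_span_monomial_image]
  simp [support_monomial]

lemma mem_iterSum_pair {x y : Fin 2 →₀ ℕ} {n : ℕ} {s : Fin 2 →₀ ℕ} :
    s ∈ iterSum n {x, y} ↔ ∃ i j, i + j = n ∧ s = i • x + j • y := by
  induction n generalizing s with
  | zero =>
    constructor
    · intro hs
      exact ⟨0, 0, rfl, by simpa [iterSum] using hs⟩
    · rintro ⟨i, j, hij, rfl⟩
      obtain ⟨rfl, rfl⟩ : i = 0 ∧ j = 0 := by omega
      simp [iterSum]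
  | succ n ih =>
    constructor
    · intro hs
      obtain ⟨g, hg, t, ht, rfl⟩ := Set.mem_add.mp hs
      obtain ⟨i, j, hij, rfl⟩ := ih.mp ht
      rcases hg with rfl | rfl
      · exact ⟨i + 1, j, by omega, by rw [succ_nsmul]; abel⟩
      · exact ⟨i, j + 1, by omega, by rw [succ_nsmul]; abel⟩
    · rintro ⟨i, j, hij, rfl⟩
      rcases Nat.eq_zero_or_pos i with rfl | hi
      · obtain rfl : j = n + 1 := by omega
        have h' : (n+1) • y = y + n • y := by rw [succ_nsmul]; abel
        rw [zero_smul, zero_add, h']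
        exact Set.add_mem_add (by simp) (ih.mpr ⟨0, n, by omega, by simp⟩)
      · obtain ⟨i', rfl⟩ : ∃ i', i = i' + 1 := ⟨i - 1, by omega⟩
        have h' : (i'+1) • x + j • y = x + (i' • x + j • y) := by rw [succ_nsmul]; abel
        rw [h']
        exact Set.add_mem_add (by simp) (ih.mpr ⟨i', j, by omega, rfl⟩)

lemma mem_iterSum_triple {x y z : Fin 2 →₀ ℕ} {n : ℕ} {s : Fin 2 →₀ ℕ} :
    s ∈ iterSum n {x, y, z} ↔ ∃ i j l, i + j + l = n ∧ s = i • x + j • y + l • z := by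
  induction n generalizing s with
  | zero =>
    constructor
    · intro hs
      exact ⟨0, 0, 0, rfl, by simpa [iterSum] using hs⟩
    · rintro ⟨i, j, l, hij, rfl⟩
      obtain ⟨rfl, rfl, rfl⟩ : i = 0 ∧ j = 0 ∧ l = 0 := by omega
      simp [iterSum]
  | succ n ih =>
    constructor
    · intro hs
      obtain ⟨g, hg, t, ht, rfl⟩ := Set.mem_add.mp hs
      obtain ⟨i, j, l, hij, rfl⟩ := ih.mp ht
      rcases hg with rfl | rfl | rfl
      · exact ⟨i + 1, j, l, by omega, by rw [succ_nsmul]; abel⟩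
      · exact ⟨i, j + 1, l, by omega, by rw [succ_nsmul]; abel⟩
      · exact ⟨i, j, l + 1, by omega, by rw [succ_nsmul]; abel⟩
    · rintro ⟨i, j, l, hij, rfl⟩
      rcases Nat.eq_zero_or_pos i with rfl | hi
      · rcases Nat.eq_zero_or_pos j with rfl | hj
        · obtain rfl : l = n + 1 := by omega
          have h' : (n+1) • z = z + n • z := by rw [succ_nsmul]; abel
          rw [zero_smul, zero_add, zero_smul, zero_add, h']
          exact Set.add_mem_add (by simp) (ih.mpr ⟨0, 0, n, by omega, by simp⟩)
        · obtain ⟨j', rfl⟩ : ∃ j', j = j' + 1 := ⟨j - 1, by omega⟩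
          have h' : (0:ℕ) • x + (j'+1) • y + l • z = y + ((0:ℕ) • x + j' • y + l • z) := by
            rw [succ_nsmul]; abel
          rw [h']
          exact Set.add_mem_add (by simp) (ih.mpr ⟨0, j', l, by omega, rfl⟩)
      · obtain ⟨i', rfl⟩ : ∃ i', i = i' + 1 := ⟨i - 1, by omega⟩
        have h' : (i'+1) • x + j • y + l • z = x + (i' • x + j • y + l • z) := by
          rw [succ_nsmul]; abel
        rw [h']
        exact Set.add_mem_add (by simp) (ih.mpr ⟨i', j, l, by omega, rfl⟩)

variable (K) in
lemma Jab_eq (a b : ℕ) : Jab K a b = Ideal.span (M K '' {E a 0, E 0 b}) := by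
  rw [Jab, Set.image_pair]
  simp only [M, mono_eq]

variable (K) in
lemma I_eq (a b c d : ℕ) :
    Ideal.span {mono K a 0, mono K 0 b, mono K c d}
      = Ideal.span (M K '' {E a 0, E 0 b, E c d}) := by
  rw [Set.image_insert_eq, Set.image_pair]
  simp only [M, mono_eq]

lemma pair_sum (a b i j : ℕ) : i • E a 0 + j • E 0 b = E (i * a) (j * b) := by
  rw [smul_E, smul_E, E_add]
  simp

lemma triple_sum (a b c d i j l : ℕ) :
    i • E a 0 + j • E 0 b + l • E c d = E (i * a + l * c) (j * b + l * d) := by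
  rw [smul_E, smul_E, smul_E, E_add, E_add]
  simp

lemma memJk (a b c d k : ℕ) :
    mono K (k * c) (k * d) ∈ Jab K a b ^ k
      ↔ ∃ i j, i + j = k ∧ i * a ≤ k * c ∧ j * b ≤ k * d := by
  rw [Jab_eq, span_image_pow, mono_eq, monomial_mem_span_iff]
  constructor
  · rintro ⟨s, hs, hle⟩
    obtain ⟨i, j, hij, rfl⟩ := mem_iterSum_pair.mp hs
    rw [pair_sum, E_le_iff] at hle
    exact ⟨i, j, hij, hle.1, hle.2⟩
  · rintro ⟨i, j, hij, h1, h2⟩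
    exact ⟨_, mem_iterSum_pair.mpr ⟨i, j, hij, rfl⟩, by rw [pair_sum, E_le_iff]; exact ⟨h1, h2⟩⟩

lemma main_iff (a b c d r : ℕ) :
    (Ideal.span {mono K a 0, mono K 0 b, mono K c d}) ^ (r + 1)
        = Jab K a b * (Ideal.span {mono K a 0, mono K 0 b, mono K c d}) ^ r
      ↔ ∃ k, 0 < k ∧ k ≤ r + 1 ∧ ∃ i j, i + j = k ∧ i * a ≤ k * c ∧ j * b ≤ k * d := by
  set I : Ideal (MvPolynomial (Fin 2) K) := Ideal.span {mono K a 0, mono K 0 b, mono K c d}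
    with hI
  have hJI : Jab K a b * I ^ r = Ideal.span
      (M K '' ({E a 0, E 0 b} + iterSum r {E a 0, E 0 b, E c d})) := by
    rw [Jab_eq, hI, I_eq, span_image_pow, Ideal.span_mul_span', image_mul]
  have hmem : (monomial (E ((r+1)*c) ((r+1)*d)) (1:K) ∈ Jab K a b * I ^ r)
      ↔ ∃ k, 0 < k ∧ k ≤ r + 1 ∧ ∃ i j, i + j = k ∧ i * a ≤ k * c ∧ j * b ≤ k * d := by
    rw [hJI, monomial_mem_span_iff]
    constructor
    · rintro ⟨s, hs, hle⟩
      obtain ⟨g, hg, t, ht, rfl⟩ := Set.mem_add.mp hs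
      obtain ⟨i, j, l, hijl, rfl⟩ := mem_iterSum_triple.mp ht
      rw [triple_sum] at hle
      rcases hg with rfl | rfl
      · rw [E_add, E_le_iff] at hle
        refine ⟨i + 1 + j, by omega, by omega, i + 1, j, by omega, ?_, ?_⟩
        · have e1 : (r+1)*c = (i+1+j)*c + l*c := by rw [show r+1 = (i+1+j)+l by omega, add_mul]
          have e2 : (i+1)*a = a + i*a := by ring
          have := hle.1
          linarith
        · have e1 : (r+1)*d = (i+1+j)*d + l*d := by rw [show r+1 = (i+1+j)+l by omega, add_mul]
          have := hle.2
          linarith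
      · rw [E_add, E_le_iff] at hle
        refine ⟨i + (j + 1), by omega, by omega, i, j + 1, by omega, ?_, ?_⟩
        · have e1 : (r+1)*c = (i+(j+1))*c + l*c := by rw [show r+1 = (i+(j+1))+l by omega, add_mul]
          have := hle.1
          linarith
        · have e1 : (r+1)*d = (i+(j+1))*d + l*d := by rw [show r+1 = (i+(j+1))+l by omega, add_mul]
          have e2 : (j+1)*b = b + j*b := by ring
          have := hle.2
          linarith
    · rintro ⟨k, hk0, hkr, i, j, hij, hia, hjb⟩
      have e1 : (r+1)*c = k*c + (r+1-k)*c := by rw [← add_mul]; congr 1; omega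
      have e2 : (r+1)*d = k*d + (r+1-k)*d := by rw [← add_mul]; congr 1; omega
      rcases Nat.eq_zero_or_pos i with rfl | hi
      · obtain ⟨j', rfl⟩ : ∃ j', j = j' + 1 := ⟨j - 1, by omega⟩
        refine ⟨E 0 b + ((0:ℕ) • E a 0 + j' • E 0 b + (r+1-k) • E c d),
          Set.add_mem_add (by simp) (mem_iterSum_triple.mpr ⟨0, j', r+1-k, by omega, rfl⟩), ?_⟩
        rw [triple_sum, E_add, E_le_iff]
        have e3 : b + j'*b = (j'+1)*b := by ring
        have e4 : (0:ℕ)*a = 0 := by ring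
        constructor <;> linarith
      · obtain ⟨i', rfl⟩ : ∃ i', i = i' + 1 := ⟨i - 1, by omega⟩
        refine ⟨E a 0 + (i' • E a 0 + j • E 0 b + (r+1-k) • E c d),
          Set.add_mem_add (by simp) (mem_iterSum_triple.mpr ⟨i', j, r+1-k, by omega, rfl⟩), ?_⟩
        rw [triple_sum, E_add, E_le_iff]
        have e3 : a + i'*a = (i'+1)*a := by ring
        constructor <;> linarith
  rw [← hmem]
  constructor
  · intro heq
    have hmC : monomial (E ((r+1)*c) ((r+1)*d)) (1:K) ∈ I ^ (r + 1) := by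
      rw [hI, I_eq, span_image_pow]
      exact Ideal.subset_span ⟨_, mem_iterSum_triple.mpr ⟨0, 0, r+1, by omega, rfl⟩,
        by simp [M, zero_smul, zero_add, smul_E]⟩
    rwa [heq] at hmC
  · intro hm
    refine le_antisymm ?_ ?_
    · rw [hI, I_eq, span_image_pow, Ideal.span_le]
      rintro p ⟨s, hs, rfl⟩
      obtain ⟨i, j, l, hijl, rfl⟩ := mem_iterSum_triple.mp hs
      rcases Nat.eq_zero_or_pos i with rfl | hi
      · rcases Nat.eq_zero_or_pos j with rfl | hj
        · obtain rfl : l = r + 1 := by omega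
          have : ((0:ℕ) • E a 0 + (0:ℕ) • E 0 b + (r+1) • E c d)
              = E ((r+1)*c) ((r+1)*d) := by
            rw [triple_sum]; simp
          have h2 : M K ((0:ℕ) • E a 0 + (0:ℕ) • E 0 b + (r+1) • E c d)
              = monomial (E ((r+1)*c) ((r+1)*d)) (1:K) := by
            rw [this]; rfl
          rw [h2]
          rw [hI, I_eq] at hm
          exact hm
        · have hsplit : (0:ℕ) • E a 0 + j • E 0 b + l • E c d
              = E 0 b + ((0:ℕ) • E a 0 + (j-1) • E 0 b + l • E c d) := by
            obtain ⟨j', rfl⟩ : ∃ j', j = j' + 1 := ⟨j - 1, by omega⟩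
            rw [triple_sum, triple_sum, E_add, Nat.add_sub_cancel]; congr 1 <;> ring
          rw [hsplit, M_add]
          refine Ideal.mul_mem_mul ?_ ?_
          · rw [Jab_eq]; exact Ideal.subset_span ⟨_, by simp, rfl⟩
          · rw [span_image_pow]
            exact Ideal.subset_span ⟨_, mem_iterSum_triple.mpr ⟨0, j-1, l, by omega, rfl⟩, rfl⟩
      · have hsplit : i • E a 0 + j • E 0 b + l • E c d
            = E a 0 + ((i-1) • E a 0 + j • E 0 b + l • E c d) := by
          obtain ⟨i', rfl⟩ : ∃ i', i = i' + 1 := ⟨i - 1, by omega⟩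
          rw [triple_sum, triple_sum, E_add, Nat.add_sub_cancel]; congr 1 <;> ring
        rw [hsplit, M_add]
        refine Ideal.mul_mem_mul ?_ ?_
        · rw [Jab_eq]; exact Ideal.subset_span ⟨_, by simp, rfl⟩
        · rw [span_image_pow]
          exact Ideal.subset_span ⟨_, mem_iterSum_triple.mpr ⟨i-1, j, l, by omega, rfl⟩, rfl⟩
    · rw [pow_succ']
      refine Ideal.mul_mono ?_ le_rfl
      rw [Jab, hI]
      exact Ideal.span_mono (by intro x hx; simp only [Set.mem_insert_iff,
        Set.mem_singleton_iff] at hx ⊢; tauto)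

end S7

theorem stmt7 (K : Type*) [Field K] (a b c d : ℕ) (hc : 0 < c) (hca : c < a)
    (hd : 0 < d) (hdb : d < b) (h : a * b ≤ b * c + a * d) :
    redNum K a b (Ideal.span {mono K a 0, mono K 0 b, mono K c d})
      = sInf {k : ℕ | 0 < k ∧ mono K (k * c) (k * d) ∈ Jab K a b ^ k} - 1 := by
  set S : Set ℕ := {k : ℕ | 0 < k ∧ mono K (k * c) (k * d) ∈ Jab K a b ^ k} with hSdef
  have hSc : ∀ k, k ∈ S ↔ 0 < k ∧ ∃ i j, i + j = k ∧ i * a ≤ k * c ∧ j * b ≤ k * d := by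
    intro k
    rw [hSdef, Set.mem_setOf_eq, S7.memJk]
  have hSne : S.Nonempty := by
    refine ⟨a * b, (hSc _).mpr ⟨Nat.mul_pos (by omega) (by omega), b * c, a * b - b * c, ?_, ?_, ?_⟩⟩
    · have h1 : b * c ≤ a * b := by
        calc b * c ≤ b * a := Nat.mul_le_mul_left b hca.le
        _ = a * b := Nat.mul_comm b a
      exact Nat.add_sub_cancel' h1
    · exact le_of_eq (by ring)
    · have h2 : a * b - b * c ≤ a * d := by
        rw [Nat.sub_le_iff_le_add]
        linarith
      calc (a * b - b * c) * b ≤ (a * d) * b := Nat.mul_le_mul_right b h2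
        _ = a * b * d := by ring
  set k0 := sInf S with hk0
  have hk0S : k0 ∈ S := Nat.sInf_mem hSne
  have hset : {r : ℕ | (Ideal.span {mono K a 0, mono K 0 b, mono K c d}) ^ (r + 1)
        = Jab K a b * (Ideal.span {mono K a 0, mono K 0 b, mono K c d}) ^ r}
      = Set.Ici (k0 - 1) := by
    ext r
    rw [Set.mem_setOf_eq, S7.main_iff, Set.mem_Ici]
    constructor
    · rintro ⟨k, hkpos, hkr, hQ⟩
      have hkS : k ∈ S := (hSc k).mpr ⟨hkpos, hQ⟩
      have := Nat.sInf_le hkS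
      omega
    · intro hr
      obtain ⟨hpos, hQ⟩ := (hSc k0).mp hk0S
      exact ⟨k0, hpos, by omega, hQ⟩
  rw [redNum, hset, csInf_Ici]
end
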